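/- arXiv:2108.04887 — 7 statements merged into one kernel-verified Lean document; each statement's English description precedes it below -/
import Mathlib

section
/- Let N ≥ 3 and let Φ : (x,y) ↦ (X,Y) be a map of the form X = x + x² + x³θ₄(x,y) + yθ₅(x,y), Y = −y(1 − λx + yθ₁(x,y) + x²θ₂(x,y)) + x^N θ₃(x,y), with θ₁,…,θ₅ C^∞ near the origin and λ > 0. Then there exists γ ∈ ℝ such that in the new coordinates ỹ = y + γx^N, Ỹ = Y + γX^N, the conjugated map Φ̃ : (x, ỹ) ↦ (X, Ỹ) has the same form with N replaced by N+1; that is, there exist C^∞ functions θ̃₁,…,θ̃₅ such that X = x + x² + x³θ̃₄(x,ỹ) + ỹθ̃₅(x,ỹ) and Ỹ = −ỹ(1 − λx + ỹθ̃₁(x,ỹ) + x²θ̃₂(x,ỹ)) + x^(N+1)θ̃₃(x,ỹ). -/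
/-!
The second component has the required form exactly when `Ỹ + ỹ(1 - λx)` lies in the ideal of
smooth functions near the origin generated by `ỹ²`, `x²ỹ` and `x^(N+1)`; since `N ≥ 2`, the same
ideal is generated by `y²`, `x²y` and `x^(N+1)`. Modulo it, Hadamard's lemma
`θ₃ = θ₃(0,0) + x A + y B` and `Xᴺ ≡ xᴺ` (as `X = x + x²(1 + xθ₄) + yθ₅` and `N ≥ 3`) reduce
`Ỹ + ỹ(1 - λx)` to `(θ₃(0,0) + 2γ) xᴺ`, so `γ = -θ₃(0,0)/2` works.
-/

open Set Filter Topology Metric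
open scoped ContDiff

universe u

-- `H` and `E` share a universe because the induction replaces `E` by `H →L[ℝ] E`.
theorem contDiff_parametric_intervalIntegral_of_contDiff {H E : Type u}
    [NormedAddCommGroup H] [NormedSpace ℝ H] [ProperSpace H]
    [NormedAddCommGroup E] [NormedSpace ℝ E]
    {f : H → ℝ → E} {n : ℕ} (hf : ContDiff ℝ n (Function.uncurry f)) (a b : ℝ) :
    ContDiff ℝ n fun x => ∫ t in a..b, f x t := by
  induction n generalizing E with
  | zero =>
    rw [Nat.cast_zero, contDiff_zero] at hf ⊢
    exact intervalIntegral.continuous_parametric_intervalIntegral_of_continuous' hf a b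
  | succ n ih =>
    set f' : H → ℝ → H →L[ℝ] E := fun x t => fderiv ℝ (f · t) x
    have hf' : ContDiff ℝ n (Function.uncurry f') :=
      (hf.comp (contDiff_snd.prodMk contDiff_fst.snd)).fderiv contDiff_fst (by push_cast; rfl)
    have hdiff (t : ℝ) (x : H) : HasFDerivAt (f · t) (f' x t) x :=
      ((hf.comp (contDiff_id.prodMk contDiff_const)).differentiable (by simp) x).hasFDerivAt
    refine contDiff_succ_iff_hasFDerivAt.2 ⟨_, ih hf', fun x₀ => ?_⟩
    obtain ⟨C, hC⟩ :=
      ((isCompact_closedBall x₀ 1).prod isCompact_uIcc).exists_bound_of_continuousOn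
        hf'.continuous.continuousOn
    refine intervalIntegral.hasFDerivAt_integral_of_dominated_of_fderiv_le (bound := fun _ => C)
      (closedBall_mem_nhds x₀ one_pos)
      (.of_forall fun x => (hf.continuous.uncurry_left x).aestronglyMeasurable)
      ((hf.continuous.uncurry_left x₀).intervalIntegrable a b)
      (hf'.continuous.uncurry_left x₀).aestronglyMeasurable ?_ intervalIntegrable_const
      (.of_forall fun t _ x _ => hdiff t x)
    exact .of_forall fun t ht x hx => hC (x, t) ⟨hx, uIoc_subset_uIcc ht⟩

theorem ContDiffOn.exists_contDiff_eventuallyEq {E F : Type*} [NormedAddCommGroup E]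
    [NormedSpace ℝ E] [HasContDiffBump E] [NormedAddCommGroup F] [NormedSpace ℝ F]
    {f : E → F} {s : Set E} {x₀ : E} {n : ℕ∞} (hf : ContDiffOn ℝ n f s) (hs : s ∈ 𝓝 x₀) :
    ∃ g : E → F, ContDiff ℝ n g ∧ g =ᶠ[𝓝 x₀] f := by
  obtain ⟨r, hr, hrs⟩ := nhds_basis_closedBall.mem_iff.1 (interior_mem_nhds.2 hs)
  let χ : ContDiffBump x₀ := ⟨r / 2, r, half_pos hr, half_lt_self hr⟩
  refine ⟨fun x => χ x • f x, contDiff_iff_contDiffAt.2 fun x => ?_, ?_⟩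
  · by_cases hx : x ∈ tsupport χ
    · rw [χ.tsupport_eq] at hx
      exact χ.contDiff.contDiffAt.smul (hf.contDiffAt (mem_interior_iff_mem_nhds.1 (hrs hx)))
    · refine contDiffAt_const (c := (0 : F)).congr_of_eventuallyEq ?_
      filter_upwards [notMem_tsupport_iff_eventuallyEq.1 hx] with y hy
      simp [hy]
  · filter_upwards [closedBall_mem_nhds x₀ (half_pos hr)] with x hx
    simp [χ.one_of_mem_closedBall hx]

theorem ContDiff.exists_contDiff_eq_add_apply {E F : Type u} [NormedAddCommGroup E]
    [NormedSpace ℝ E] [ProperSpace E] [NormedAddCommGroup F] [NormedSpace ℝ F] [CompleteSpace F]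
    {f : E → F} (hf : ContDiff ℝ ∞ f) :
    ∃ L : E → E →L[ℝ] F, ContDiff ℝ ∞ L ∧ ∀ x, f x = f 0 + L x x := by
  have hf' : ContDiff ℝ ∞ fun p : E × ℝ => fderiv ℝ f (p.2 • p.1) :=
    (hf.fderiv_right le_rfl).comp (contDiff_snd.smul contDiff_fst)
  refine ⟨fun x => ∫ t in (0 : ℝ)..1, fderiv ℝ f (t • x),
    contDiff_infty.2 fun n =>
      contDiff_parametric_intervalIntegral_of_contDiff (contDiff_infty.1 hf' n) 0 1,
    fun x => ?_⟩
  have hderiv (t : ℝ) : HasDerivAt (fun t : ℝ => f (t • x)) (fderiv ℝ f (t • x) x) t := by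
    simpa [Function.comp_def] using
      ((hf.differentiable (by simp)) (t • x)).hasFDerivAt.comp_hasDerivAt t
        ((hasDerivAt_id t).smul_const x)
  have hcont : Continuous fun t : ℝ => fderiv ℝ f (t • x) :=
    hf'.continuous.comp (continuous_const.prodMk continuous_id)
  have hftc := intervalIntegral.integral_eq_sub_of_hasDerivAt (fun t _ => hderiv t)
    ((hcont.clm_apply continuous_const).intervalIntegrable 0 1)
  rw [← ContinuousLinearMap.intervalIntegral_apply (hcont.intervalIntegrable 0 1)] at hftc
  simp only [one_smul, zero_smul] at hftc
  rw [hftc, add_sub_cancel]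

theorem ContDiffOn.exists_eventually_eq_add_fst_mul_add_snd_mul {θ : ℝ × ℝ → ℝ}
    {V : Set (ℝ × ℝ)} (hθ : ContDiffOn ℝ ∞ θ V) (hV : V ∈ 𝓝 0) :
    ∃ A B : ℝ × ℝ → ℝ, ContDiff ℝ ∞ A ∧ ContDiff ℝ ∞ B ∧
      ∀ᶠ p in 𝓝 0, θ p = θ 0 + p.1 * A p + p.2 * B p := by
  obtain ⟨g, hg, hgθ⟩ := hθ.exists_contDiff_eventuallyEq hV
  obtain ⟨L, hL, hgL⟩ := hg.exists_contDiff_eq_add_apply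
  refine ⟨fun p => L p (1, 0), fun p => L p (0, 1), hL.clm_apply contDiff_const,
    hL.clm_apply contDiff_const, ?_⟩
  filter_upwards [hgθ] with p hp
  have hLp : L p p = L p (p.1 • (1, 0) + p.2 • (0, 1)) := by congr 1; ext <;> simp
  rw [← hp, ← hgθ.eq_of_nhds, hgL p, hLp, map_add, map_smul, map_smul, smul_eq_mul, smul_eq_mul,
    add_assoc]

theorem exists_contDiffOn_pow_expansion {U : Set (ℝ × ℝ)} {n : WithTop ℕ∞} {u v : ℝ × ℝ → ℝ}
    (hu : ContDiffOn ℝ n u U) (hv : ContDiffOn ℝ n v U) (N : ℕ) :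
    ∃ a b c : ℝ × ℝ → ℝ, ContDiffOn ℝ n a U ∧ ContDiffOn ℝ n b U ∧ ContDiffOn ℝ n c U ∧
      ∀ x y : ℝ, (x + x ^ 2 * u (x, y) + y * v (x, y)) ^ (N + 1)
        = x ^ (N + 1) + x ^ (N + 2) * a (x, y) + x ^ N * y * b (x, y) + y ^ 2 * c (x, y) := by
  induction N with
  | zero => exact ⟨u, v, 0, hu, hv, contDiffOn_const, fun x y => by simp⟩
  | succ N ih =>
    obtain ⟨a, b, c, ha, hb, hc, h⟩ := ih
    refine ⟨fun p => a p + u p + p.1 * u p * a p,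
      fun p => b p + p.1 * u p * b p + v p + p.1 * v p * a p,
      fun p => (p.1 + p.1 ^ 2 * u p + p.2 * v p) * c p + p.1 ^ N * v p * b p,
      by fun_prop, by fun_prop, by fun_prop, fun x y => ?_⟩
    rw [pow_succ', h]
    ring

theorem exists_contDiffOn_shear_remainder {U : Set (ℝ × ℝ)} {n : WithTop ℕ∞} {P Q R : ℝ × ℝ → ℝ}
    (hP : ContDiffOn ℝ n P U) (hQ : ContDiffOn ℝ n Q U) (hR : ContDiffOn ℝ n R U) (γ : ℝ)
    {N : ℕ} (hN : 2 ≤ N) :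
    ∃ g₁ g₂ g₃ : ℝ × ℝ → ℝ, ContDiffOn ℝ n g₁ U ∧ ContDiffOn ℝ n g₂ U ∧ ContDiffOn ℝ n g₃ U ∧
      ∀ x y : ℝ, -y * (y * P (x, y) + x ^ 2 * Q (x, y)) + x ^ (N + 1) * R (x, y)
        = -(y + γ * x ^ N) * ((y + γ * x ^ N) * g₁ (x, y) + x ^ 2 * g₂ (x, y))
          + x ^ (N + 1) * g₃ (x, y) := by
  obtain ⟨k, rfl⟩ : ∃ k, N = k + 2 := ⟨N - 2, by omega⟩
  exact ⟨P, fun p => Q p - 2 * γ * p.1 ^ k * P p,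
    fun p => R p - γ ^ 2 * p.1 ^ (k + 1) * P p + γ * p.1 * Q p, hP, by fun_prop, by fun_prop,
    fun x y => by ring⟩

theorem exists_contDiffOn_sheared_normal_form {U : Set (ℝ × ℝ)} {n : WithTop ℕ∞}
    {θ₁ θ₂ θ₃ θ₄ θ₅ A B : ℝ × ℝ → ℝ} (hθ₁ : ContDiffOn ℝ n θ₁ U) (hθ₂ : ContDiffOn ℝ n θ₂ U)
    (hθ₄ : ContDiffOn ℝ n θ₄ U) (hθ₅ : ContDiffOn ℝ n θ₅ U) (hA : ContDiffOn ℝ n A U)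
    (hB : ContDiffOn ℝ n B U) {c γ : ℝ} (hθ₃ : ∀ p ∈ U, θ₃ p = c + p.1 * A p + p.2 * B p)
    (hγ : c + 2 * γ = 0) (lam : ℝ) {N : ℕ} (hN : 3 ≤ N) :
    ∃ t₁ t₂ t₃ : ℝ × ℝ → ℝ, ContDiffOn ℝ n t₁ U ∧ ContDiffOn ℝ n t₂ U ∧ ContDiffOn ℝ n t₃ U ∧
      ∀ x y : ℝ, (x, y) ∈ U →
        (-y * (1 - lam * x + y * θ₁ (x, y) + x ^ 2 * θ₂ (x, y)) + x ^ N * θ₃ (x, y))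
            + γ * (x + x ^ 2 + x ^ 3 * θ₄ (x, y) + y * θ₅ (x, y)) ^ N
          = -(y + γ * x ^ N) * (1 - lam * x + (y + γ * x ^ N) * t₁ (x, y) + x ^ 2 * t₂ (x, y))
            + x ^ (N + 1) * t₃ (x, y) := by
  obtain ⟨k, rfl⟩ : ∃ k, N = k + 3 := ⟨N - 3, by omega⟩
  obtain ⟨a, b, c', ha, hb, hc', hpow⟩ := exists_contDiffOn_pow_expansion
    (u := fun p => 1 + p.1 * θ₄ p) (by fun_prop) hθ₅ (k + 2)
  obtain ⟨t₁, t₂, t₃, ht₁, ht₂, ht₃, hshear⟩ := exists_contDiffOn_shear_remainder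
    (P := fun p => θ₁ p - γ * c' p) (Q := fun p => θ₂ p - p.1 ^ (k + 1) * B p - γ * p.1 ^ k * b p)
    (R := fun p => A p + γ * a p - lam * γ) (by fun_prop) (by fun_prop) (by fun_prop) γ
    (N := k + 3) (by omega)
  refine ⟨t₁, t₂, t₃, ht₁, ht₂, ht₃, fun x y hxy => ?_⟩
  have hX : x + x ^ 2 + x ^ 3 * θ₄ (x, y) + y * θ₅ (x, y)
      = x + x ^ 2 * (1 + x * θ₄ (x, y)) + y * θ₅ (x, y) := by ring
  rw [hθ₃ _ hxy, hX, hpow x y]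
  linear_combination hshear x y + x ^ (k + 3) * hγ

def shear (γ : ℝ) (N : ℕ) (p : ℝ × ℝ) : ℝ × ℝ := (p.1, p.2 + γ * p.1 ^ N)

theorem contDiff_shear (γ : ℝ) (N : ℕ) {n : WithTop ℕ∞} : ContDiff ℝ n (shear γ N) :=
  contDiff_fst.prodMk (contDiff_snd.add (contDiff_const.mul (contDiff_fst.pow N)))

theorem shear_neg_apply (γ : ℝ) (N : ℕ) (x y : ℝ) : shear (-γ) N (x, y + γ * x ^ N) = (x, y) := by
  simp [shear]

theorem shear_preimage_mem_nhds_zero (γ : ℝ) {N : ℕ} (hN : N ≠ 0) {U : Set (ℝ × ℝ)}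
    (hU : U ∈ 𝓝 0) : shear γ N ⁻¹' U ∈ 𝓝 0 := by
  have h0 : shear γ N 0 = 0 := by simp [shear, hN]
  exact (contDiff_shear γ N (n := 0)).continuous.continuousAt.preimage_mem_nhds (by rwa [h0])

theorem coordinate_change_raises_order_general
    (θ₁ θ₂ θ₃ θ₄ θ₅ : ℝ × ℝ → ℝ) (V : Set (ℝ × ℝ)) (hV : V ∈ 𝓝 (0 : ℝ × ℝ))
    (hθ₁ : ContDiffOn ℝ (⊤ : ℕ∞) θ₁ V) (hθ₂ : ContDiffOn ℝ (⊤ : ℕ∞) θ₂ V)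
    (hθ₃ : ContDiffOn ℝ (⊤ : ℕ∞) θ₃ V) (hθ₄ : ContDiffOn ℝ (⊤ : ℕ∞) θ₄ V)
    (hθ₅ : ContDiffOn ℝ (⊤ : ℕ∞) θ₅ V)
    (lam : ℝ) (N : ℕ) (hN : 3 ≤ N) :
    ∃ γ : ℝ, ∃ W : Set (ℝ × ℝ), W ∈ 𝓝 (0 : ℝ × ℝ) ∧ W ⊆ V ∧
      ∃ t₁ t₂ t₃ t₄ t₅ : ℝ × ℝ → ℝ,
        ContDiffOn ℝ (⊤ : ℕ∞) t₁ W ∧ ContDiffOn ℝ (⊤ : ℕ∞) t₂ W ∧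
        ContDiffOn ℝ (⊤ : ℕ∞) t₃ W ∧ ContDiffOn ℝ (⊤ : ℕ∞) t₄ W ∧
        ContDiffOn ℝ (⊤ : ℕ∞) t₅ W ∧
        ∀ x y : ℝ, (x, y) ∈ W →
          (x + x ^ 2 + x ^ 3 * θ₄ (x, y) + y * θ₅ (x, y)
              = x + x ^ 2 + x ^ 3 * t₄ (x, y + γ * x ^ N)
                + (y + γ * x ^ N) * t₅ (x, y + γ * x ^ N)) ∧
          ((-y * (1 - lam * x + y * θ₁ (x, y) + x ^ 2 * θ₂ (x, y)) + x ^ N * θ₃ (x, y))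
              + γ * (x + x ^ 2 + x ^ 3 * θ₄ (x, y) + y * θ₅ (x, y)) ^ N
            = -(y + γ * x ^ N) * (1 - lam * x
                  + (y + γ * x ^ N) * t₁ (x, y + γ * x ^ N)
                  + x ^ 2 * t₂ (x, y + γ * x ^ N))
              + x ^ (N + 1) * t₃ (x, y + γ * x ^ N)) := by
  obtain ⟨A, B, hA, hB, hθ₃AB⟩ := hθ₃.exists_eventually_eq_add_fst_mul_add_snd_mul hV
  set γ := -θ₃ 0 / 2 with hγ
  set U := V ∩ {p | θ₃ p = θ₃ 0 + p.1 * A p + p.2 * B p}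
  have hUV : U ⊆ V := inter_subset_left
  have hU : U ∈ 𝓝 0 := inter_mem hV hθ₃AB
  obtain ⟨t₁, t₂, t₃, ht₁, ht₂, ht₃, hY⟩ := exists_contDiffOn_sheared_normal_form
    (hθ₁.mono hUV) (hθ₂.mono hUV) (hθ₄.mono hUV) (hθ₅.mono hUV) hA.contDiffOn hB.contDiffOn
    (fun p hp => hp.2) (show θ₃ 0 + 2 * γ = 0 by rw [hγ]; ring) lam hN
  set σ := shear (-γ) N
  have hσ {g : ℝ × ℝ → ℝ} (hg : ContDiffOn ℝ ∞ g U) : ContDiffOn ℝ ∞ (g ∘ σ) (U ∩ σ ⁻¹' U) :=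
    hg.comp (contDiff_shear _ _).contDiffOn fun _ hp => hp.2
  have ht₄ : ContDiffOn ℝ ∞ (fun p => θ₄ p - γ * p.1 ^ (N - 3) * θ₅ p) U :=
    (hθ₄.mono hUV).sub ((contDiffOn_const.mul (contDiffOn_fst.pow _)).mul (hθ₅.mono hUV))
  refine ⟨γ, U ∩ σ ⁻¹' U, inter_mem hU (shear_preimage_mem_nhds_zero _ (by omega) hU),
    inter_subset_left.trans hUV, t₁ ∘ σ, t₂ ∘ σ, t₃ ∘ σ, _ ∘ σ, θ₅ ∘ σ, hσ ht₁, hσ ht₂, hσ ht₃,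
    hσ ht₄, hσ (hθ₅.mono hUV), fun x y hxy => ?_⟩
  simp only [Function.comp_apply, σ, shear_neg_apply]
  exact ⟨by linear_combination (γ * θ₅ (x, y)) * pow_mul_pow_sub x hN, hY x y hxy.1⟩

/-- **Change of coordinates.** For a map
`X = x + x² + x³θ₄(x,y) + yθ₅(x,y)`,
`Y = -y(1 - λx + yθ₁(x,y) + x²θ₂(x,y)) + x^N θ₃(x,y)` with `θᵢ` smooth near the
origin, `λ > 0`, `N ≥ 3`, there is `γ ∈ ℝ` such that in the coordinates
`ỹ = y + γxᴺ`, `Ỹ = Y + γXᴺ` the map takes the same form with `N+1` in place of `N`. -/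
theorem coordinate_change_raises_order
    (θ₁ θ₂ θ₃ θ₄ θ₅ : ℝ × ℝ → ℝ) (V : Set (ℝ × ℝ)) (hV : V ∈ 𝓝 (0 : ℝ × ℝ))
    (hθ₁ : ContDiffOn ℝ (⊤ : ℕ∞) θ₁ V) (hθ₂ : ContDiffOn ℝ (⊤ : ℕ∞) θ₂ V)
    (hθ₃ : ContDiffOn ℝ (⊤ : ℕ∞) θ₃ V) (hθ₄ : ContDiffOn ℝ (⊤ : ℕ∞) θ₄ V)
    (hθ₅ : ContDiffOn ℝ (⊤ : ℕ∞) θ₅ V)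
    (lam : ℝ) (hlam : 0 < lam) (N : ℕ) (hN : 3 ≤ N) :
    ∃ γ : ℝ, ∃ W : Set (ℝ × ℝ), W ∈ 𝓝 (0 : ℝ × ℝ) ∧ W ⊆ V ∧
      ∃ t₁ t₂ t₃ t₄ t₅ : ℝ × ℝ → ℝ,
        ContDiffOn ℝ (⊤ : ℕ∞) t₁ W ∧ ContDiffOn ℝ (⊤ : ℕ∞) t₂ W ∧
        ContDiffOn ℝ (⊤ : ℕ∞) t₃ W ∧ ContDiffOn ℝ (⊤ : ℕ∞) t₄ W ∧
        ContDiffOn ℝ (⊤ : ℕ∞) t₅ W ∧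
        ∀ x y : ℝ, (x, y) ∈ W →
          (x + x ^ 2 + x ^ 3 * θ₄ (x, y) + y * θ₅ (x, y)
              = x + x ^ 2 + x ^ 3 * t₄ (x, y + γ * x ^ N)
                + (y + γ * x ^ N) * t₅ (x, y + γ * x ^ N)) ∧
          ((-y * (1 - lam * x + y * θ₁ (x, y) + x ^ 2 * θ₂ (x, y)) + x ^ N * θ₃ (x, y))
              + γ * (x + x ^ 2 + x ^ 3 * θ₄ (x, y) + y * θ₅ (x, y)) ^ N
            = -(y + γ * x ^ N) * (1 - lam * x
                  + (y + γ * x ^ N) * t₁ (x, y + γ * x ^ N)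
                  + x ^ 2 * t₂ (x, y + γ * x ^ N))
              + x ^ (N + 1) * t₃ (x, y + γ * x ^ N)) :=
  coordinate_change_raises_order_general θ₁ θ₂ θ₃ θ₄ θ₅ V hV hθ₁ hθ₂ hθ₃ hθ₄ hθ₅ lam N hN
end

section
/- Let Φ be of the form (IA). Then there exists δ₀ > 0 such that for all (x,y) with x ∈ [0, 10δ₀] and |y| ≤ x^N, the image (X,Y) = Φ(x,y) satisfies |Y| ≤ X^N. Moreover X ≥ x for such (x,y). -/
/-! On the strip `|y| ≤ xᴺ` the perturbation terms are tiny: with `M` a bound for the `θ`'s near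
the origin, `X ≥ x + x²(1 - 2Mx) ≥ x`, and `|Y| ≤ xᴺ(1 - λx + 3Mx²) ≤ xᴺ` as soon as
`3Mx ≤ λ`, because the contraction `1 - λx` of the linear part beats the quadratic error.
Then `|Y| ≤ xᴺ ≤ Xᴺ`. -/

open Set Filter Asymptotics Topology

/-- First component of a map `Φ` of the form (IA):
`X = x + x² + x³ θ_A(x,y) + y θ_B(x,y)`. -/
noncomputable def XIA (θA θB : ℝ × ℝ → ℝ) (x y : ℝ) : ℝ :=
  x + x ^ 2 + x ^ 3 * θA (x, y) + y * θB (x, y)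

/-- Second component of a map `Φ` of the form (IA):
`Y = -y(1 - λx + y θ_C(x,y) + x² θ_D(x,y)) + x^(N+100) θ_E(x,y)`. -/
noncomputable def YIA (θC θD θE : ℝ × ℝ → ℝ) (lam : ℝ) (N : ℕ) (x y : ℝ) : ℝ :=
  -y * (1 - lam * x + y * θC (x, y) + x ^ 2 * θD (x, y)) + x ^ (N + 100) * θE (x, y)

section Estimates

variable {θA θB θC θD θE : ℝ × ℝ → ℝ} {x y M lam : ℝ} {N : ℕ}

theorem le_XIA (hx : 0 ≤ x) (hx1 : x ≤ 1) (hMx : 2 * M * x ≤ 1) (hN : 3 ≤ N)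
    (hy : |y| ≤ x ^ N) (hA : |θA (x, y)| ≤ M) (hB : |θB (x, y)| ≤ M) :
    x ≤ XIA θA θB x y := by
  have hM : 0 ≤ M := (abs_nonneg _).trans hA
  have hxA : |x ^ 3 * θA (x, y)| ≤ x ^ 3 * M := by
    rw [abs_mul, abs_of_nonneg (pow_nonneg hx 3)]
    exact mul_le_mul_of_nonneg_left hA (by positivity)
  have hyB : |y * θB (x, y)| ≤ x ^ 3 * M := by
    rw [abs_mul]
    exact mul_le_mul (hy.trans (pow_le_pow_of_le_one hx hx1 hN)) hB (abs_nonneg _) (by positivity)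
  unfold XIA
  nlinarith [(abs_le.mp hxA).1, (abs_le.mp hyB).1,
    mul_nonneg (pow_nonneg hx 2) (sub_nonneg.mpr hMx)]

theorem abs_YIA_le (hx : 0 ≤ x) (hx1 : x ≤ 1) (hlx : lam * x ≤ 1) (hMx : 3 * M * x ≤ lam)
    (hN : 2 ≤ N) (hy : |y| ≤ x ^ N) (hC : |θC (x, y)| ≤ M) (hD : |θD (x, y)| ≤ M)
    (hE : |θE (x, y)| ≤ M) :
    |YIA θC θD θE lam N x y| ≤ x ^ N := by
  have hM : 0 ≤ M := (abs_nonneg _).trans hC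
  have hxN : 0 ≤ x ^ N := pow_nonneg hx N
  have hyC : |y * θC (x, y)| ≤ x ^ 2 * M := by
    rw [abs_mul]
    exact mul_le_mul (hy.trans (pow_le_pow_of_le_one hx hx1 hN)) hC (abs_nonneg _) (by positivity)
  have hxD : |x ^ 2 * θD (x, y)| ≤ x ^ 2 * M := by
    rw [abs_mul, abs_of_nonneg (pow_nonneg hx 2)]
    exact mul_le_mul_of_nonneg_left hD (by positivity)
  have hlin : |1 - lam * x + y * θC (x, y) + x ^ 2 * θD (x, y)| ≤ 1 - lam * x + 2 * M * x ^ 2 :=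
    calc _ ≤ |1 - lam * x| + |y * θC (x, y)| + |x ^ 2 * θD (x, y)| := abs_add_three _ _ _
      _ ≤ 1 - lam * x + 2 * M * x ^ 2 := by rw [abs_of_nonneg (sub_nonneg.mpr hlx)]; linarith
  have hxE : |x ^ (N + 100) * θE (x, y)| ≤ x ^ N * (x ^ 2 * M) := by
    rw [abs_mul, abs_of_nonneg (pow_nonneg hx _), pow_add, mul_assoc]
    exact mul_le_mul_of_nonneg_left
      (mul_le_mul (pow_le_pow_of_le_one hx hx1 (by norm_num)) hE (abs_nonneg _) (by positivity)) hxN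
  calc |YIA θC θD θE lam N x y|
      ≤ |y| * |1 - lam * x + y * θC (x, y) + x ^ 2 * θD (x, y)|
        + |x ^ (N + 100) * θE (x, y)| := by
        unfold YIA; rw [← abs_neg y, ← abs_mul]; exact abs_add_le _ _
    _ ≤ x ^ N * (1 - lam * x + 2 * M * x ^ 2) + x ^ N * (x ^ 2 * M) := by
        gcongr ?_ + ?_
        exact mul_le_mul hy hlin (abs_nonneg _) hxN
    _ = x ^ N * (1 - x * (lam - 3 * M * x)) := by ring
    _ ≤ x ^ N := by
        refine mul_le_of_le_one_right hxN ?_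
        nlinarith [mul_nonneg hx (sub_nonneg.mpr hMx)]

end Estimates

theorem eventually_abs_lt_of_continuousAt {X : Type*} [TopologicalSpace X] {θ : X → ℝ} {p : X}
    {M : ℝ} (hθ : ContinuousAt θ p) (hM : |θ p| < M) : ∀ᶠ q in 𝓝 p, |θ q| < M :=
  hθ.abs.eventually_lt continuousAt_const hM

theorem eventually_mul_lt (c : ℝ) {b : ℝ} (hb : 0 < b) : ∀ᶠ x in 𝓝 (0 : ℝ), c * x < b :=
  (continuousAt_const.mul continuousAt_id).eventually_lt continuousAt_const (by simpa using hb)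

theorem exists_pos_forall_Icc_of_eventually {P : ℝ → Prop} (h : ∀ᶠ x in 𝓝 (0 : ℝ), P x) :
    ∃ δ > (0 : ℝ), ∀ x ∈ Icc 0 δ, P x := by
  obtain ⟨ε, hε, hP⟩ := Metric.eventually_nhds_iff.mp h
  refine ⟨ε / 2, half_pos hε, fun x hx => hP ?_⟩
  rw [Real.dist_0_eq_abs, abs_of_nonneg hx.1]
  linarith [hx.2]

/-- **Assertion 1.** For `Φ` of the form (IA) there is `δ₀ > 0` such
that for `x ∈ [0, 10δ₀]` and `|y| ≤ xᴺ`, the image `(X,Y) = Φ(x,y)` satisfies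
`|Y| ≤ Xᴺ`; moreover `X ≥ x`. -/
theorem assertion1
    (θA θB θC θD θE : ℝ × ℝ → ℝ) (V : Set (ℝ × ℝ)) (hV : V ∈ 𝓝 (0 : ℝ × ℝ))
    (hθA : ContDiffOn ℝ (⊤ : ℕ∞) θA V) (hθB : ContDiffOn ℝ (⊤ : ℕ∞) θB V)
    (hθC : ContDiffOn ℝ (⊤ : ℕ∞) θC V) (hθD : ContDiffOn ℝ (⊤ : ℕ∞) θD V)
    (hθE : ContDiffOn ℝ (⊤ : ℕ∞) θE V)
    (lam : ℝ) (hlam : 0 < lam) (N : ℕ) (hN : 100 ≤ N)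
    :
    ∃ δ₀ > (0 : ℝ), ∀ x y : ℝ, x ∈ Icc (0 : ℝ) (10 * δ₀) → |y| ≤ x ^ N →
      |YIA θC θD θE lam N x y| ≤ (XIA θA θB x y) ^ N ∧ x ≤ XIA θA θB x y := by
  set M := 1 + |θA 0| + |θB 0| + |θC 0| + |θD 0| + |θE 0|
  have := abs_nonneg (θA 0); have := abs_nonneg (θB 0); have := abs_nonneg (θC 0)
  have := abs_nonneg (θD 0); have := abs_nonneg (θE 0)
  have hbound : ∀ θ : ℝ × ℝ → ℝ, ContDiffOn ℝ (⊤ : ℕ∞) θ V → |θ 0| < M →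
      ∀ᶠ p in 𝓝 0, |θ p| < M := fun θ hθ =>
    eventually_abs_lt_of_continuousAt (hθ.continuousOn.continuousAt hV)
  obtain ⟨ε, hε, hball⟩ := Metric.eventually_nhds_iff.mp <|
    (hbound θA hθA (by linarith)).and <| (hbound θB hθB (by linarith)).and <|
    (hbound θC hθC (by linarith)).and <| (hbound θD hθD (by linarith)).and <|
    hbound θE hθE (by linarith)
  have hsmall : ∀ᶠ x in 𝓝 (0 : ℝ),
      x < ε ∧ x < 1 ∧ 2 * M * x < 1 ∧ lam * x < 1 ∧ 3 * M * x < lam :=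
    (eventually_lt_nhds hε).and <| (eventually_lt_nhds one_pos).and <|
      (eventually_mul_lt _ one_pos).and <| (eventually_mul_lt _ one_pos).and <|
      eventually_mul_lt _ hlam
  obtain ⟨δ, hδ, hδP⟩ := exists_pos_forall_Icc_of_eventually hsmall
  refine ⟨δ / 10, by positivity, fun x y hx hy => ?_⟩
  rw [mul_div_cancel₀ _ (by norm_num)] at hx
  obtain ⟨hxε, hx1, h2Mx, hlx, h3Mx⟩ := hδP x hx
  have hyx : |y| ≤ x := hy.trans (pow_le_of_le_one hx.1 hx1.le (by omega))
  obtain ⟨hA, hB, hC, hD, hE⟩ := hball (y := (x, y)) <| by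
    simp only [Prod.dist_eq, max_lt_iff, Prod.fst_zero, Prod.snd_zero, Real.dist_0_eq_abs,
      abs_of_nonneg hx.1]
    exact ⟨hxε, hyx.trans_lt hxε⟩
  have hXx := le_XIA hx.1 hx1.le h2Mx.le (by omega) hy hA.le hB.le
  exact ⟨(abs_YIA_le hx.1 hx1.le hlx.le h3Mx.le (by omega) hy hC.le hD.le hE.le).trans
    (pow_le_pow_left₀ hx.1 hXx N), hXx⟩
end

section
/- Let Φ be of the form (IA). For every constant K₁ > 0 there exists δ > 0 (depending on Φ and K₁) such that the following holds. Let f : [0, x_MAX] → ℝ be C^∞ with 0 < x_MAX ≤ 10δ, |f(x)| ≤ x^N and |f'(x)| ≤ K₁ x^(N−1) on [0, x_MAX]. Define X(x) as the first component of Φ(x, f(x)). Then dX/dx ≥ 1 for all x ∈ [0, x_MAX]. -/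
open Set Filter Asymptotics Topology

/-!
Along the graph of `f` the chain rule gives
`dX/dx = 1 + 2x + 3x²θ_A + x³ dθ_A(1, f') + f' θ_B + f dθ_B(1, f')`.
Since `θ_A`, `θ_B` are `C¹` near the origin, they and their differentials are bounded there by
some `M`; with `|f| ≤ x^N` and `|f'| ≤ K₁ x^(N-1)` the last four terms are then bounded by
`C x²` with `C` depending only on `M` and `K₁`, and `2x - C x² ≥ 0` as soon as `C x ≤ 2`.
-/

theorem ContDiffAt.exists_eventually_hasFDerivAt_norm_le
    {𝕜 E F : Type*} [NontriviallyNormedField 𝕜] [NormedAddCommGroup E] [NormedSpace 𝕜 E]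
    [NormedAddCommGroup F] [NormedSpace 𝕜 F] {g : E → F} {a : E} (hg : ContDiffAt 𝕜 1 g a) :
    ∃ M, ∀ᶠ p in 𝓝 a, HasFDerivAt g (fderiv 𝕜 g p) p ∧ ‖g p‖ ≤ M ∧ ‖fderiv 𝕜 g p‖ ≤ M := by
  have hdiff : ∀ᶠ p in 𝓝 a, HasFDerivAt g (fderiv 𝕜 g p) p :=
    (hg.eventually (by simp)).mono fun p hp ↦ (hp.differentiableAt one_ne_zero).hasFDerivAt
  have hg_le := hg.continuousAt.norm.eventually (gt_mem_nhds (lt_add_one ‖g a‖))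
  have hg'_le := (hg.continuousAt_fderiv one_ne_zero).norm.eventually
    (gt_mem_nhds (lt_add_one ‖fderiv 𝕜 g a‖))
  refine ⟨max (‖g a‖ + 1) (‖fderiv 𝕜 g a‖ + 1), ?_⟩
  filter_upwards [hdiff, hg_le, hg'_le] with p hp h₁ h₂
  exact ⟨hp, h₁.le.trans (le_max_left _ _), h₂.le.trans (le_max_right _ _)⟩

theorem abs_apply_one_le {L : ℝ × ℝ →L[ℝ] ℝ} {M K v : ℝ} (hL : ‖L‖ ≤ M) (hv : |v| ≤ K) :
    |L (1, v)| ≤ M * (1 + K) := by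
  have hv_norm : ‖((1 : ℝ), v)‖ ≤ 1 + K := by
    rw [Prod.norm_def]; simp only [Real.norm_eq_abs, abs_one]
    exact max_le (by linarith [abs_nonneg v]) (by linarith)
  calc |L (1, v)| ≤ ‖L‖ * ‖((1 : ℝ), v)‖ := L.le_opNorm _
    _ ≤ M * (1 + K) := by gcongr; exact (norm_nonneg _).trans hL

theorem one_le_one_add_two_mul_add_perturbation {x y y' a b da db M K : ℝ} (hK : 0 ≤ K)
    (hx₀ : 0 ≤ x) (hx₁ : x ≤ 1) (hy : |y| ≤ x ^ 2) (hy' : |y'| ≤ K * x ^ 2)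
    (ha : |a| ≤ M) (hb : |b| ≤ M) (hda : |da| ≤ M * (1 + K)) (hdb : |db| ≤ M * (1 + K))
    (hsmall : (3 * M + 2 * M * (1 + K) + K * M) * x ≤ 2) :
    1 ≤ 1 + 2 * x + (3 * x ^ 2 * a + x ^ 3 * da) + (y' * b + y * db) := by
  have hM : 0 ≤ M := (abs_nonneg a).trans ha
  have hx₃ : x ^ 3 ≤ x ^ 2 := pow_le_pow_of_le_one hx₀ hx₁ (by norm_num)
  have hbound : |3 * x ^ 2 * a + x ^ 3 * da + (y' * b + y * db)|
      ≤ (3 * M + 2 * M * (1 + K) + K * M) * x ^ 2 :=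
    calc _ ≤ |3 * x ^ 2 * a| + |x ^ 3 * da| + (|y' * b| + |y * db|) :=
          (abs_add_le _ _).trans (add_le_add (abs_add_le _ _) (abs_add_le _ _))
      _ = 3 * x ^ 2 * |a| + x ^ 3 * |da| + (|y'| * |b| + |y| * |db|) := by
          simp only [abs_mul, abs_of_nonneg hx₀, abs_pow]; norm_num
      _ ≤ 3 * x ^ 2 * M + x ^ 2 * (M * (1 + K)) + (K * x ^ 2 * M + x ^ 2 * (M * (1 + K))) := by
          gcongr
      _ = _ := by ring
  nlinarith [neg_abs_le (3 * x ^ 2 * a + x ^ 3 * da + (y' * b + y * db))]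

theorem hasDerivWithinAt_XIA_comp {θA θB : ℝ × ℝ → ℝ} {A B : ℝ × ℝ →L[ℝ] ℝ} {f : ℝ → ℝ}
    {f' x : ℝ} {s : Set ℝ} (hA : HasFDerivAt θA A (x, f x)) (hB : HasFDerivAt θB B (x, f x))
    (hf : HasDerivWithinAt f f' s x) :
    HasDerivWithinAt (fun t ↦ XIA θA θB t (f t))
      (1 + 2 * x + (3 * x ^ 2 * θA (x, f x) + x ^ 3 * A (1, f'))
        + (f' * θB (x, f x) + f x * B (1, f'))) s x := by
  have hgraph : HasDerivWithinAt (fun t ↦ (t, f t)) (1, f') s x :=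
    (hasDerivWithinAt_id x s).prodMk hf
  have hid : HasDerivWithinAt (fun t : ℝ ↦ t) 1 s x := hasDerivWithinAt_id x s
  refine (((hid.add (hid.pow 2)).add ((hid.pow 3).mul (hA.comp_hasDerivWithinAt x hgraph))).add
    (hf.mul (hB.comp_hasDerivWithinAt x hgraph))).congr_deriv ?_
  simp only [Function.comp_apply, Pi.pow_apply]
  ring

theorem assertion2_general
    (θA θB : ℝ × ℝ → ℝ) (V : Set (ℝ × ℝ)) (hV : V ∈ 𝓝 (0 : ℝ × ℝ))
    (hθA : ContDiffOn ℝ (⊤ : ℕ∞) θA V) (hθB : ContDiffOn ℝ (⊤ : ℕ∞) θB V)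
    (N : ℕ) (hN : 100 ≤ N)
    :
    ∀ K₁ > (0 : ℝ), ∃ δ > (0 : ℝ), ∀ (xMAX : ℝ) (f : ℝ → ℝ),
      0 < xMAX → xMAX ≤ 10 * δ →
      ContDiffOn ℝ (⊤ : ℕ∞) f (Icc 0 xMAX) →
      (∀ x ∈ Icc (0 : ℝ) xMAX, |f x| ≤ x ^ N) →
      (∀ x ∈ Icc (0 : ℝ) xMAX, |derivWithin f (Icc 0 xMAX) x| ≤ K₁ * x ^ (N - 1)) →
      ∀ x ∈ Icc (0 : ℝ) xMAX,
        1 ≤ derivWithin (fun t => XIA θA θB t (f t)) (Icc 0 xMAX) x := by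
  intro K₁ hK₁
  obtain ⟨MA, hA⟩ := ((hθA.contDiffAt hV).of_le (by simp)).exists_eventually_hasFDerivAt_norm_le
  obtain ⟨MB, hB⟩ := ((hθB.contDiffAt hV).of_le (by simp)).exists_eventually_hasFDerivAt_norm_le
  obtain ⟨r, hr, hAB⟩ := Metric.eventually_nhds_iff.1 (hA.and hB)
  set M := max MA MB
  set C := 3 * M + 2 * M * (1 + K₁) + K₁ * M
  refine ⟨min (r / 2) (min 1 (2 / max C 1)) / 10, by positivity, ?_⟩
  intro xMAX f hxMAX hxMAX_le hf hf_le hf'_le x hx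
  obtain ⟨hxr, hx₁, hxC⟩ : x ≤ r / 2 ∧ x ≤ 1 ∧ x ≤ 2 / max C 1 := by
    simpa only [le_min_iff, mul_div_cancel₀ _ (by norm_num : (10 : ℝ) ≠ 0)] using
      hx.2.trans hxMAX_le
  have hfx : |f x| ≤ x ^ 2 := (hf_le x hx).trans (pow_le_pow_of_le_one hx.1 hx₁ (by omega))
  have hf'x : |derivWithin f (Icc 0 xMAX) x| ≤ K₁ * x ^ 2 :=
    (hf'_le x hx).trans
      (mul_le_mul_of_nonneg_left (pow_le_pow_of_le_one hx.1 hx₁ (by omega)) hK₁.le)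
  have hgraph : dist (x, f x) 0 < r := by
    rw [dist_zero_right, Prod.norm_def, Real.norm_eq_abs, Real.norm_eq_abs, abs_of_nonneg hx.1]
    have hx₂ : x ^ 2 ≤ x := pow_le_of_le_one hx.1 hx₁ two_ne_zero
    exact max_lt (by linarith) (by linarith)
  obtain ⟨⟨hdθA, ha, hda⟩, ⟨hdθB, hb, hdb⟩⟩ := hAB hgraph
  have hf' := ((hf.differentiableOn (by simp)) x hx).hasDerivWithinAt
  rw [(hasDerivWithinAt_XIA_comp hdθA hdθB hf').derivWithin (uniqueDiffOn_Icc hxMAX x hx)]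
  have hf'K : |derivWithin f (Icc 0 xMAX) x| ≤ K₁ :=
    hf'x.trans (mul_le_of_le_one_right hK₁.le (pow_le_one₀ hx.1 hx₁))
  refine one_le_one_add_two_mul_add_perturbation hK₁.le hx.1 hx₁ hfx hf'x
    (ha.trans (le_max_left _ _)) (hb.trans (le_max_right _ _))
    (abs_apply_one_le (hda.trans (le_max_left _ _)) hf'K)
    (abs_apply_one_le (hdb.trans (le_max_right _ _)) hf'K) ?_
  calc C * x ≤ max C 1 * x := by gcongr; exacts [hx.1, le_max_left C 1]
    _ ≤ 2 := (le_div_iff₀' (lt_max_of_lt_right one_pos)).1 hxC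

/-- **Assertion 2.** For `Φ` of the form (IA) and any `K₁ > 0` there is
`δ > 0` such that: if `f` is `C^∞` on `[0, x_MAX]`, `0 < x_MAX ≤ 10δ`, `|f(x)| ≤ xᴺ`
and `|f'(x)| ≤ K₁ x^(N-1)` there, then the first component `X(x)` of `Φ(x, f(x))`
satisfies `dX/dx ≥ 1` on `[0, x_MAX]`. -/
theorem assertion2
    (θA θB θC θD θE : ℝ × ℝ → ℝ) (V : Set (ℝ × ℝ)) (hV : V ∈ 𝓝 (0 : ℝ × ℝ))
    (hθA : ContDiffOn ℝ (⊤ : ℕ∞) θA V) (hθB : ContDiffOn ℝ (⊤ : ℕ∞) θB V)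
    (hθC : ContDiffOn ℝ (⊤ : ℕ∞) θC V) (hθD : ContDiffOn ℝ (⊤ : ℕ∞) θD V)
    (hθE : ContDiffOn ℝ (⊤ : ℕ∞) θE V)
    (lam : ℝ) (hlam : 0 < lam) (N : ℕ) (hN : 100 ≤ N)
    :
    ∀ K₁ > (0 : ℝ), ∃ δ > (0 : ℝ), ∀ (xMAX : ℝ) (f : ℝ → ℝ),
      0 < xMAX → xMAX ≤ 10 * δ →
      ContDiffOn ℝ (⊤ : ℕ∞) f (Icc 0 xMAX) →
      (∀ x ∈ Icc (0 : ℝ) xMAX, |f x| ≤ x ^ N) →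
      (∀ x ∈ Icc (0 : ℝ) xMAX, |derivWithin f (Icc 0 xMAX) x| ≤ K₁ * x ^ (N - 1)) →
      ∀ x ∈ Icc (0 : ℝ) xMAX,
        1 ≤ derivWithin (fun t => XIA θA θB t (f t)) (Icc 0 xMAX) x :=
  assertion2_general θA θB V hV hθA hθB N hN
end

section
/- Let Φ be of the form (IA). There exist constants K₁ > 0 and δ > 0 (depending only on Φ and on Φ, K₁ respectively) such that the following holds. Let f : [0, x_MAX] → ℝ be C^∞ with 0 < x_MAX ≤ δ, |f(x)| ≤ x^N and |f'(x)| ≤ K₁ x^(N−1) on [0, x_MAX]. Then the image Φ({(x, f(x)) : x ∈ [0, x_MAX]}) equals {(X, F(X)) : X ∈ [0, X_MAX]} for some X_MAX > 0 and some C^∞ function F satisfying |F(X)| ≤ X^N and |F'(X)| ≤ K₁ X^(N−1) for all X ∈ [0, X_MAX]. -/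
/-!
Along the graph of `f`, the first component `g(x) = X(x, f x)` satisfies `g x ≥ x` and
`g' ≥ 1 + x`, so it is a smooth increasing bijection `[0, x_MAX] → [0, g x_MAX]` whose inverse is
smooth. The image of the graph is therefore the graph of `F = w ∘ g⁻¹`, `w(x) = Y(x, f x)`, and
`F' = w' / g'` at `g x`. If `M ≥ 1` bounds the `θ`'s and their first derivatives near the origin,
`w = -f · (1 - λx + O(x²)) + O(x^(N+100))` gives `|w x| ≤ x^N` once `3Mx ≤ λ`, and differentiating
gives `|w' x| ≤ K₁ x^(N-1) (1 + x) ≤ K₁ x^(N-1) g' x` for `K₁ = λ + (N + 106) M + 1` and `x` small.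
Since `x ≤ g x`, both bounds transfer to `F`.
-/

open Set Filter Asymptotics Topology

open scoped ContDiff

theorem IsCompact.continuousOn_of_invOn {X Y : Type*} [TopologicalSpace X] [TopologicalSpace Y]
    [T2Space Y] {g : X → Y} {h : Y → X} {s : Set X} {t : Set Y} (hs : IsCompact s)
    (hg : ContinuousOn g s) (hinv : InvOn h g s t) (hh : MapsTo h t s) :
    ContinuousOn h t := by
  refine continuousOn_iff_isClosed.2 fun C hC => ⟨g '' (C ∩ s), ?_, ?_⟩
  · exact ((hs.inter_left hC).image_of_continuousOn (hg.mono inter_subset_right)).isClosed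
  · ext X
    constructor
    · rintro ⟨hXC, hXt⟩
      exact ⟨⟨h X, ⟨hXC, hh hXt⟩, hinv.2 hXt⟩, hXt⟩
    · rintro ⟨⟨x, ⟨hxC, hxs⟩, rfl⟩, hXt⟩
      exact ⟨by rwa [mem_preimage, hinv.1 hxs], hXt⟩

theorem HasDerivWithinAt.of_local_left_inverse {𝕜 : Type*} [NontriviallyNormedField 𝕜]
    {f g : 𝕜 → 𝕜} {f' a : 𝕜} {s t : Set 𝕜}
    (hg : Tendsto g (𝓝[s] a) (𝓝[t] (g a))) (hf : HasDerivWithinAt f f' t (g a)) (hf' : f' ≠ 0)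
    (ha : a ∈ s) (hfg : ∀ᶠ y in 𝓝[s] a, f (g y) = y) : HasDerivWithinAt g f'⁻¹ s a := by
  simpa using (HasFDerivWithinAt.of_local_left_inverse
    (f' := ContinuousLinearEquiv.unitsEquivAut 𝕜 (Units.mk0 f' hf')) hg hf ha hfg).hasDerivWithinAt

/-- Stated for every `w ∘ h` rather than for `h` alone so that the induction on the order of
smoothness closes: `(w ∘ h)' = (w' / g') ∘ h`. -/
theorem contDiffOn_comp_of_hasDerivWithinAt_inv {𝕜 : Type*} [NontriviallyNormedField 𝕜]
    {g h w : 𝕜 → 𝕜} {s t : Set 𝕜} (hs : UniqueDiffOn 𝕜 s) (ht : UniqueDiffOn 𝕜 t)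
    (hg : ContDiffOn 𝕜 ∞ g s) (hg' : ∀ x ∈ s, derivWithin g s x ≠ 0) (hh : MapsTo h t s)
    (hh' : ∀ X ∈ t, HasDerivWithinAt h (derivWithin g s (h X))⁻¹ t X)
    (hw : ContDiffOn 𝕜 ∞ w s) : ContDiffOn 𝕜 ∞ (w ∘ h) t := by
  refine contDiffOn_infty.2 fun n => ?_
  induction n generalizing w with
  | zero =>
    exact contDiffOn_zero.2 <|
      hw.continuousOn.comp (fun X hX => (hh' X hX).continuousWithinAt) hh
  | succ n ih =>
    have hderiv : ∀ X ∈ t, HasDerivWithinAt (w ∘ h)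
        ((fun x => derivWithin w s x * (derivWithin g s x)⁻¹) (h X)) t X := fun X hX =>
      (hw.differentiableOn (by simp) _ (hh hX)).hasDerivWithinAt.comp X (hh' X hX) hh
    have hquot : ContDiffOn 𝕜 ∞ (fun x => derivWithin w s x * (derivWithin g s x)⁻¹) s :=
      (hw.derivWithin hs le_rfl).mul ((hg.derivWithin hs le_rfl).inv hg')
    rw [Nat.cast_add, Nat.cast_one, contDiffOn_succ_iff_derivWithin ht]
    refine ⟨fun X hX => (hderiv X hX).differentiableWithinAt, by simp, ?_⟩
    exact (ih hquot).congr fun X hX => (hderiv X hX).derivWithin (ht X hX)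

theorem exists_contDiffOn_image_graph_eq {g w : ℝ → ℝ} {a b : ℝ} (hab : a < b)
    (hg : ContDiffOn ℝ ∞ g (Icc a b)) (hg' : ∀ x ∈ Icc a b, 0 < derivWithin g (Icc a b) x)
    (hw : ContDiffOn ℝ ∞ w (Icc a b)) :
    ∃ F : ℝ → ℝ, ContDiffOn ℝ ∞ F (Icc (g a) (g b)) ∧
      (fun x => (g x, w x)) '' Icc a b = (fun X => (X, F X)) '' Icc (g a) (g b) ∧
      ∀ x ∈ Icc a b, derivWithin F (Icc (g a) (g b)) (g x)
        = derivWithin w (Icc a b) x / derivWithin g (Icc a b) x := by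
  set s := Icc a b
  set t := Icc (g a) (g b)
  have hs : UniqueDiffOn ℝ s := uniqueDiffOn_Icc hab
  have hgd : ∀ x ∈ s, HasDerivWithinAt g (derivWithin g s x) s x := fun x hx =>
    (hg.differentiableOn (by simp) x hx).hasDerivWithinAt
  have hmono : StrictMonoOn g s :=
    strictMonoOn_of_hasDerivWithinAt_pos (convex_Icc a b) hg.continuousOn
      (fun x hx => (hgd x (interior_subset hx)).mono interior_subset)
      (fun x hx => hg' x (interior_subset hx))
  have himage : g '' s = t := hg.continuousOn.image_Icc_of_monotoneOn hab.le hmono.monotoneOn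
  have hbij : BijOn g s t := himage ▸ hmono.injOn.bijOn_image
  have ht : UniqueDiffOn ℝ t := uniqueDiffOn_Icc (hmono ⟨le_rfl, hab.le⟩ ⟨hab.le, le_rfl⟩ hab)
  set h := Function.invFunOn g s
  have hinv : InvOn h g s t := hbij.invOn_invFunOn
  have hh : MapsTo h t s := hbij.surjOn.mapsTo_invFunOn
  have hcont : ContinuousOn h t := isCompact_Icc.continuousOn_of_invOn hg.continuousOn hinv hh
  have hh' : ∀ X ∈ t, HasDerivWithinAt h (derivWithin g s (h X))⁻¹ t X := fun X hX =>
    .of_local_left_inverse ((hcont X hX).tendsto_nhdsWithin hh) (hgd _ (hh hX))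
      (hg' _ (hh hX)).ne' hX (eventually_nhdsWithin_of_forall fun _ hY => hinv.2 hY)
  refine ⟨w ∘ h, contDiffOn_comp_of_hasDerivWithinAt_inv hs ht hg (fun x hx => (hg' x hx).ne')
    hh hh' hw, ?_, fun x hx => ?_⟩
  · rw [← hbij.image_eq, image_image]
    exact image_congr fun x hx => by simp [hinv.1 hx]
  · have := (hw.differentiableOn (by simp) _ (hh (hbij.mapsTo hx))).hasDerivWithinAt.comp
      (g x) (hh' _ (hbij.mapsTo hx)) hh
    rw [hinv.1 hx] at this
    rw [this.derivWithin (ht _ (hbij.mapsTo hx)), div_eq_mul_inv]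

theorem exists_bound_abs_and_norm_fderiv {E : Type*} [NormedAddCommGroup E] [NormedSpace ℝ E]
    {S : Set (E → ℝ)} (hS : S.Finite) {U K : Set E} (hU : IsOpen U) (hK : IsCompact K)
    (hKU : K ⊆ U) (hθ : ∀ θ ∈ S, ContDiffOn ℝ 1 θ U) :
    ∃ M, ∀ θ ∈ S, ∀ p ∈ K, |θ p| ≤ M ∧ ‖fderiv ℝ θ p‖ ≤ M := by
  have : ∀ θ ∈ S, ∃ M, ∀ p ∈ K, |θ p| ≤ M ∧ ‖fderiv ℝ θ p‖ ≤ M := by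
    intro θ hθS
    obtain ⟨M₁, h₁⟩ := hK.exists_bound_of_continuousOn ((hθ θ hθS).continuousOn.mono hKU)
    obtain ⟨M₂, h₂⟩ := hK.exists_bound_of_continuousOn
      (((hθ θ hθS).continuousOn_fderiv_of_isOpen hU le_rfl).mono hKU)
    exact ⟨max M₁ M₂, fun p hp =>
      ⟨(h₁ p hp).trans (le_max_left _ _), (h₂ p hp).trans (le_max_right _ _)⟩⟩
  choose! Mθ hMθ using this
  obtain ⟨M, hM⟩ := (hS.image Mθ).bddAbove
  refine ⟨M, fun θ hθS p hp => ?_⟩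
  have hle : Mθ θ ≤ M := hM (mem_image_of_mem _ hθS)
  exact ⟨(hMθ θ hθS p hp).1.trans hle, (hMθ θ hθS p hp).2.trans hle⟩

def BoundedSmoothOn (M : ℝ) (φ : ℝ → ℝ) (s : Set ℝ) : Prop :=
  ContDiffOn ℝ ∞ φ s ∧ ∀ x ∈ s, |φ x| ≤ M ∧ |derivWithin φ s x| ≤ M

theorem boundedSmoothOn_comp_graph {θ : ℝ × ℝ → ℝ} {f : ℝ → ℝ} {U K : Set (ℝ × ℝ)}
    {s : Set ℝ} {M : ℝ} (hU : IsOpen U) (hθ : ContDiffOn ℝ ∞ θ U) (hKU : K ⊆ U)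
    (hθM : ∀ p ∈ K, |θ p| ≤ M ∧ ‖fderiv ℝ θ p‖ ≤ M) (hs : UniqueDiffOn ℝ s)
    (hf : ContDiffOn ℝ ∞ f s) (hfK : ∀ x ∈ s, (x, f x) ∈ K)
    (hf' : ∀ x ∈ s, |derivWithin f s x| ≤ 1) :
    BoundedSmoothOn M (fun x => θ (x, f x)) s := by
  refine ⟨hθ.comp (contDiffOn_id.prodMk hf) fun x hx => hKU (hfK x hx),
    fun x hx => ⟨(hθM _ (hfK x hx)).1, ?_⟩⟩
  have hθx : HasFDerivAt θ (fderiv ℝ θ (x, f x)) (x, f x) :=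
    ((hθ.contDiffAt (hU.mem_nhds (hKU (hfK x hx)))).differentiableAt (by simp)).hasFDerivAt
  have hcomp : HasDerivWithinAt (fun y => θ (y, f y))
      (fderiv ℝ θ (x, f x) (1, derivWithin f s x)) s x :=
    hθx.comp_hasDerivWithinAt x ((hasDerivWithinAt_id x s).prodMk
      (hf.differentiableOn (by simp) x hx).hasDerivWithinAt)
  have hM : 0 ≤ M := (norm_nonneg _).trans (hθM _ (hfK x hx)).2
  have hv : ‖((1 : ℝ), derivWithin f s x)‖ ≤ 1 := by
    simpa [Prod.norm_def] using hf' x hx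
  rw [hcomp.derivWithin (hs x hx), ← Real.norm_eq_abs]
  calc ‖fderiv ℝ θ (x, f x) (1, derivWithin f s x)‖
      ≤ ‖fderiv ℝ θ (x, f x)‖ * ‖((1 : ℝ), derivWithin f s x)‖ :=
        ContinuousLinearMap.le_opNorm _ _
    _ ≤ M * 1 := mul_le_mul (hθM _ (hfK x hx)).2 hv (norm_nonneg _) hM
    _ = M := mul_one M

theorem abs_mul_le_mul_of_abs_le {α : Type*} [Ring α] [LinearOrder α] [IsStrictOrderedRing α]
    {p q P Q : α} (hp : |p| ≤ P) (hq : |q| ≤ Q) : |p * q| ≤ P * Q := by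
  rw [abs_mul]
  exact mul_le_mul hp hq (abs_nonneg _) ((abs_nonneg _).trans hp)

/-! In the following estimates `y`, `y'` stand for `f x`, `f' x`, the letters `a, …, e` for the
values of `θ_A, …, θ_E` along the graph and the primed letters for their derivatives, `q` for the
factor `1 - λx + y θ_C + x² θ_D` of `Y` and `u` for `x^(N-1)`. -/

section Estimates

variable {M K lam x y y' a a' b b' c c' d d' e e' q q' T p u v : ℝ} {N : ℕ}

theorem le_XIA_of_abs_le (hx : 0 ≤ x) (hMx : 2 * M * x ≤ 1) (ha : |a| ≤ M) (hb : |b| ≤ M)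
    (hy : |y| ≤ x ^ 3) : x ≤ x + x ^ 2 + x ^ 3 * a + y * b := by
  have h1 := abs_le.1 (abs_mul_le_mul_of_abs_le (abs_of_nonneg (by positivity : 0 ≤ x ^ 3)).le ha)
  have h2 := abs_le.1 (abs_mul_le_mul_of_abs_le hy hb)
  nlinarith [mul_nonneg (sq_nonneg x) (sub_nonneg.2 hMx)]

theorem one_add_le_derivXIA_of_abs_le (hx : 0 ≤ x) (hx1 : x ≤ 1)
    (hMx : (K + 5) * M * x ≤ 1) (ha : |a| ≤ M) (ha' : |a'| ≤ M) (hb : |b| ≤ M) (hb' : |b'| ≤ M)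
    (hy : |y| ≤ x ^ 2) (hy' : |y'| ≤ K * x ^ 2) :
    1 + x ≤ 1 + 2 * x + 3 * x ^ 2 * a + x ^ 3 * a' + y' * b + y * b' := by
  have hM : 0 ≤ M := (abs_nonneg _).trans ha
  have h1 := abs_le.1 (abs_mul_le_mul_of_abs_le
    (abs_of_nonneg (by positivity : 0 ≤ 3 * x ^ 2)).le ha)
  have h2 := abs_le.1 (abs_mul_le_mul_of_abs_le (abs_of_nonneg (by positivity : 0 ≤ x ^ 3)).le ha')
  have h3 := abs_le.1 (abs_mul_le_mul_of_abs_le hy' hb)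
  have h4 := abs_le.1 (abs_mul_le_mul_of_abs_le hy hb')
  have hx3 : x ^ 3 * M ≤ x ^ 2 * M :=
    mul_le_mul_of_nonneg_right (pow_le_pow_of_le_one hx hx1 (by norm_num)) hM
  nlinarith [mul_nonneg hx (sub_nonneg.2 hMx)]

theorem abs_YIA_factor_le (hlx : lam * x ≤ 1) (hc : |c| ≤ M) (hd : |d| ≤ M)
    (hy : |y| ≤ x ^ 2) :
    |1 - lam * x + y * c + x ^ 2 * d| ≤ 1 - lam * x + 2 * M * x ^ 2 := by
  have h1 := abs_le.1 (abs_mul_le_mul_of_abs_le hy hc)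
  have h2 := abs_le.1 (abs_mul_le_mul_of_abs_le (abs_of_nonneg (sq_nonneg x)).le hd)
  rw [abs_le]; constructor <;> nlinarith

theorem abs_YIA_factor_deriv_le (hx : 0 ≤ x) (hx1 : x ≤ 1) (hlam : 0 ≤ lam) (hc : |c| ≤ M)
    (hc' : |c'| ≤ M) (hd : |d| ≤ M) (hd' : |d'| ≤ M) (hy : |y| ≤ 1) (hy' : |y'| ≤ 1) :
    |-lam + y' * c + y * c' + 2 * x * d + x ^ 2 * d'| ≤ lam + 5 * M := by
  have hM : 0 ≤ M := (abs_nonneg _).trans hc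
  have h1 := abs_le.1 (abs_mul_le_mul_of_abs_le hy' hc)
  have h2 := abs_le.1 (abs_mul_le_mul_of_abs_le hy hc')
  have h3 := abs_le.1 (abs_mul_le_mul_of_abs_le
    (abs_of_nonneg (by positivity : 0 ≤ 2 * x)).le hd)
  have h4 := abs_le.1 (abs_mul_le_mul_of_abs_le (abs_of_nonneg (sq_nonneg x)).le hd')
  have hx2 : x ^ 2 ≤ 1 := pow_le_one₀ hx hx1
  rw [abs_le]; constructor <;> nlinarith

theorem abs_YIA_tail_deriv_le (hx : 0 ≤ x) (hx1 : x ≤ 1) (he : |e| ≤ M) (he' : |e'| ≤ M) :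
    |((N : ℝ) + 100) * x ^ (N + 99) * e + x ^ (N + 100) * e'| ≤ ((N : ℝ) + 101) * M * x ^ N := by
  have h1 := abs_mul_le_mul_of_abs_le (abs_of_nonneg (by positivity :
    0 ≤ ((N : ℝ) + 100) * x ^ (N + 99))).le he
  have h2 := abs_mul_le_mul_of_abs_le (abs_of_nonneg (by positivity : 0 ≤ x ^ (N + 100))).le he'
  have hM : 0 ≤ M := (abs_nonneg _).trans he
  have p1 : x ^ (N + 99) ≤ x ^ N := pow_le_pow_of_le_one hx hx1 (by omega)
  have p2 : x ^ (N + 100) ≤ x ^ N := pow_le_pow_of_le_one hx hx1 (by omega)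
  calc _ ≤ ((N : ℝ) + 100) * x ^ (N + 99) * M + x ^ (N + 100) * M :=
        (abs_add_le _ _).trans (add_le_add h1 h2)
    _ ≤ ((N : ℝ) + 100) * x ^ N * M + x ^ N * M := by gcongr
    _ = ((N : ℝ) + 101) * M * x ^ N := by ring

theorem abs_YIA_le_of_abs_factor_le (hx : 0 ≤ x) (hMx : 3 * M * x ≤ lam) (hy : |y| ≤ p)
    (hq : |q| ≤ 1 - lam * x + 2 * M * x ^ 2) (he : |e| ≤ M) (hv : 0 ≤ v) (hvp : v ≤ p * x ^ 2) :
    |-y * q + v * e| ≤ p := by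
  have hp : 0 ≤ p := (abs_nonneg _).trans hy
  have h1 := abs_mul_le_mul_of_abs_le ((abs_neg y).le.trans hy) hq
  have h2 := abs_mul_le_mul_of_abs_le ((abs_of_nonneg hv).le.trans hvp) he
  calc |-y * q + v * e| ≤ p * (1 - lam * x + 2 * M * x ^ 2) + p * x ^ 2 * M :=
        (abs_add_le _ _).trans (add_le_add h1 h2)
    _ = p - p * x * (lam - 3 * M * x) := by ring
    _ ≤ p := by nlinarith [mul_nonneg (mul_nonneg hp hx) (sub_nonneg.2 hMx)]

theorem abs_derivYIA_le_of_abs_factor_le {L : ℝ} (hx : 0 ≤ x) (hu : 0 ≤ u) (hlam : 0 ≤ lam)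
    (hL : 0 ≤ L) (hKMx : 2 * K * M * x ≤ 1) (hK : lam + 5 * M + L + 1 ≤ K) (hy : |y| ≤ u * x)
    (hy' : |y'| ≤ K * u) (hq : |q| ≤ 1 - lam * x + 2 * M * x ^ 2) (hq' : |q'| ≤ lam + 5 * M)
    (hT : |T| ≤ L * (u * x)) :
    |-y' * q - y * q' + T| ≤ K * u * (1 + x) := by
  have h1 := abs_mul_le_mul_of_abs_le ((abs_neg y').le.trans hy') hq
  have h2 := abs_mul_le_mul_of_abs_le hy hq'
  have hK0 : 0 ≤ K := by linarith [(abs_nonneg _).trans hq']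
  calc |-y' * q - y * q' + T| ≤ |-y' * q| + |y * q'| + |T| :=
        (abs_add_le _ _).trans (add_le_add_left (abs_sub _ _) _)
    _ ≤ K * u * (1 - lam * x + 2 * M * x ^ 2) + u * x * (lam + 5 * M) + L * (u * x) := by
        gcongr
    _ = K * u * (1 + x) - u * x * (K * lam + (K - (lam + 5 * M + L + 1))
          + (1 - 2 * K * M * x)) := by ring
    _ ≤ K * u * (1 + x) := by
        nlinarith [mul_nonneg hK0 hlam, mul_nonneg hu hx]

theorem abs_YIA_le_and_abs_derivYIA_le (hN : 3 ≤ N) (hM : 1 ≤ M)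
    (hK : lam + (N + 106) * M + 1 ≤ K) (hsmall : 2 * (lam + K + 5) * M * x ≤ 1)
    (hlam : 3 * M * x ≤ lam) (hx : 0 ≤ x) (hy : |y| ≤ x ^ N) (hy' : |y'| ≤ K * x ^ (N - 1))
    (hc : |c| ≤ M) (hc' : |c'| ≤ M) (hd : |d| ≤ M) (hd' : |d'| ≤ M) (he : |e| ≤ M)
    (he' : |e'| ≤ M) :
    |-y * (1 - lam * x + y * c + x ^ 2 * d) + x ^ (N + 100) * e| ≤ x ^ N ∧
      |-y' * (1 - lam * x + y * c + x ^ 2 * d)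
          - y * (-lam + y' * c + y * c' + 2 * x * d + x ^ 2 * d')
          + (((N : ℝ) + 100) * x ^ (N + 99) * e + x ^ (N + 100) * e')|
        ≤ K * x ^ (N - 1) * (1 + x) := by
  have hlam0 : 0 ≤ lam := le_trans (by positivity) hlam
  have hK0 : 0 ≤ K := by linarith [mul_nonneg (Nat.cast_nonneg N) (zero_le_one.trans hM)]
  have hx' : 2 * (lam + K + 5) * x ≤ 1 := by
    nlinarith [mul_nonneg (mul_nonneg (by positivity : 0 ≤ 2 * (lam + K + 5)) hx)
      (sub_nonneg.2 hM)]
  have hlx : 0 ≤ lam * x := mul_nonneg hlam0 hx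
  have hKx : 0 ≤ K * x := mul_nonneg hK0 hx
  have hx1 : x ≤ 1 := by linarith
  have hpow : x ^ N = x ^ (N - 1) * x := by rw [← pow_succ, Nat.sub_add_cancel (by omega)]
  have hu2 : x ^ (N - 1) ≤ x ^ 2 := pow_le_pow_of_le_one hx hx1 (by omega)
  have hy2 : |y| ≤ x ^ 2 := hy.trans (pow_le_pow_of_le_one hx hx1 (by omega))
  have hy'1 : |y'| ≤ 1 := by
    have : x ^ 2 ≤ x := by nlinarith
    nlinarith [mul_le_mul_of_nonneg_left (hu2.trans this) hK0]
  have hq := abs_YIA_factor_le (lam := lam) (by linarith) hc hd hy2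
  have hvx : x ^ (N + 100) ≤ x ^ N * x ^ 2 := by
    rw [pow_add]
    exact mul_le_mul_of_nonneg_left (pow_le_pow_of_le_one hx hx1 (by norm_num)) (by positivity)
  exact ⟨abs_YIA_le_of_abs_factor_le hx hlam hy hq he (by positivity) hvx,
    abs_derivYIA_le_of_abs_factor_le (L := (N + 101) * M) hx (by positivity) hlam0
      (by positivity) (by nlinarith) (by linarith) (hpow ▸ hy) hy' hq
      (abs_YIA_factor_deriv_le hx hx1 hlam0 hc hc' hd hd'
        (hy2.trans (pow_le_one₀ hx hx1)) hy'1)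
      (hpow ▸ abs_YIA_tail_deriv_le hx hx1 he he')⟩

end Estimates

theorem exists_image_eq_graph_of_bounds {g w : ℝ → ℝ} {ℓ K : ℝ} {N : ℕ} (hℓ : 0 < ℓ)
    (hK : 0 ≤ K) (hg : ContDiffOn ℝ ∞ g (Icc 0 ℓ)) (hw : ContDiffOn ℝ ∞ w (Icc 0 ℓ))
    (hg0 : g 0 = 0) (hgx : ∀ x ∈ Icc 0 ℓ, x ≤ g x)
    (hg' : ∀ x ∈ Icc 0 ℓ, 1 + x ≤ derivWithin g (Icc 0 ℓ) x)
    (hwN : ∀ x ∈ Icc 0 ℓ, |w x| ≤ x ^ N)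
    (hw' : ∀ x ∈ Icc 0 ℓ, |derivWithin w (Icc 0 ℓ) x| ≤ K * x ^ (N - 1) * (1 + x)) :
    ∃ XMAX > (0 : ℝ), ∃ F : ℝ → ℝ, ContDiffOn ℝ ∞ F (Icc 0 XMAX) ∧
      (fun x => (g x, w x)) '' Icc 0 ℓ = (fun X => (X, F X)) '' Icc 0 XMAX ∧
      (∀ X ∈ Icc (0 : ℝ) XMAX, |F X| ≤ X ^ N) ∧
      (∀ X ∈ Icc (0 : ℝ) XMAX, |derivWithin F (Icc 0 XMAX) X| ≤ K * X ^ (N - 1)) := by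
  have hgpos : ∀ x ∈ Icc 0 ℓ, 0 < derivWithin g (Icc 0 ℓ) x := fun x hx => by
    linarith [hg' x hx, hx.1]
  obtain ⟨F, hF, himage, hF'⟩ := exists_contDiffOn_image_graph_eq hℓ hg hgpos hw
  rw [hg0] at hF himage hF'
  have hpre : ∀ X ∈ Icc 0 (g ℓ), ∃ x ∈ Icc 0 ℓ, g x = X ∧ w x = F X := fun X hX => by
    obtain ⟨x, hx, hxX⟩ := himage.symm ▸ mem_image_of_mem (fun X => (X, F X)) hX
    exact ⟨x, hx, Prod.ext_iff.1 hxX⟩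
  refine ⟨g ℓ, hℓ.trans_le (hgx ℓ ⟨hℓ.le, le_rfl⟩), F, hF, himage, fun X hX => ?_,
    fun X hX => ?_⟩
  · obtain ⟨x, hx, rfl, hFx⟩ := hpre X hX
    rw [← hFx]
    exact (hwN x hx).trans (pow_le_pow_left₀ hx.1 (hgx x hx) N)
  · obtain ⟨x, hx, rfl, -⟩ := hpre X hX
    rw [hF' x hx, abs_div, abs_of_pos (hgpos x hx), div_le_iff₀ (hgpos x hx)]
    calc _ ≤ K * x ^ (N - 1) * (1 + x) := hw' x hx
      _ ≤ K * x ^ (N - 1) * derivWithin g (Icc 0 ℓ) x :=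
          mul_le_mul_of_nonneg_left (hg' x hx) (mul_nonneg hK (pow_nonneg hx.1 _))
      _ ≤ K * g x ^ (N - 1) * derivWithin g (Icc 0 ℓ) x :=
          mul_le_mul_of_nonneg_right (mul_le_mul_of_nonneg_left
            (pow_le_pow_left₀ hx.1 (hgx x hx) _) hK) (hgpos x hx).le

/-- `a, …, e` play the role of `θ_A, …, θ_E` composed with `x ↦ (x, f x)`, so that
`XIA θA θB x (f x)` and `YIA θC θD θE lam N x (f x)` unfold to these expressions. -/
def XIAGraph (a b f : ℝ → ℝ) (x : ℝ) : ℝ :=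
  x + x ^ 2 + x ^ 3 * a x + f x * b x

def YIAGraph (c d e : ℝ → ℝ) (lam : ℝ) (N : ℕ) (f : ℝ → ℝ) (x : ℝ) : ℝ :=
  -f x * (1 - lam * x + f x * c x + x ^ 2 * d x) + x ^ (N + 100) * e x

section Graph

variable {a b c d e f : ℝ → ℝ} {a' b' c' d' e' f' lam x : ℝ} {s : Set ℝ} {N : ℕ}

theorem hasDerivWithinAt_XIAGraph (ha : HasDerivWithinAt a a' s x)
    (hb : HasDerivWithinAt b b' s x) (hf : HasDerivWithinAt f f' s x) :
    HasDerivWithinAt (XIAGraph a b f)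
      (1 + 2 * x + 3 * x ^ 2 * a x + x ^ 3 * a' + f' * b x + f x * b') s x := by
  refine ((((hasDerivWithinAt_id x s).add (hasDerivWithinAt_pow 2 x)).add
    ((hasDerivWithinAt_pow 3 x).mul ha)).add (hf.mul hb)).congr_deriv ?_
  norm_num
  ring

theorem hasDerivWithinAt_YIAGraph (hc : HasDerivWithinAt c c' s x)
    (hd : HasDerivWithinAt d d' s x) (he : HasDerivWithinAt e e' s x)
    (hf : HasDerivWithinAt f f' s x) :
    HasDerivWithinAt (YIAGraph c d e lam N f)
      (-f' * (1 - lam * x + f x * c x + x ^ 2 * d x)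
        - f x * (-lam + f' * c x + f x * c' + 2 * x * d x + x ^ 2 * d')
        + (((N : ℝ) + 100) * x ^ (N + 99) * e x + x ^ (N + 100) * e')) s x := by
  have hQ := (((hasDerivWithinAt_const x s (1 : ℝ)).sub
    ((hasDerivWithinAt_id x s).const_mul lam)).add (hf.mul hc)).add
    ((hasDerivWithinAt_pow 2 x).mul hd)
  refine ((hf.neg.mul hQ).add ((hasDerivWithinAt_pow (N + 100) x).mul he)).congr_deriv ?_
  norm_num
  ring

end Graph

section Curve

variable {M K lam ℓ : ℝ} {N : ℕ} {f a b c d e : ℝ → ℝ}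

theorem self_le_XIAGraph_and_one_add_le_derivWithin (hℓ : 0 < ℓ) (hN : 3 ≤ N) (hM : 1 ≤ M)
    (hK : 0 ≤ K) (hsmall : (K + 5) * M * ℓ ≤ 1) (hf : ContDiffOn ℝ ∞ f (Icc 0 ℓ))
    (hfN : ∀ x ∈ Icc 0 ℓ, |f x| ≤ x ^ N)
    (hf' : ∀ x ∈ Icc 0 ℓ, |derivWithin f (Icc 0 ℓ) x| ≤ K * x ^ (N - 1))
    (ha : BoundedSmoothOn M a (Icc 0 ℓ)) (hb : BoundedSmoothOn M b (Icc 0 ℓ)) :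
    ∀ x ∈ Icc 0 ℓ, x ≤ XIAGraph a b f x ∧ 1 + x ≤ derivWithin (XIAGraph a b f) (Icc 0 ℓ) x := by
  intro x hx
  have hMx : (K + 5) * M * x ≤ 1 :=
    le_trans (mul_le_mul_of_nonneg_left hx.2 (by positivity)) hsmall
  have hKM : 0 ≤ K * M * x := mul_nonneg (mul_nonneg hK (zero_le_one.trans hM)) hx.1
  have hx1 : x ≤ 1 := by nlinarith [mul_nonneg (sub_nonneg.2 hM) hx.1]
  have hd := hasDerivWithinAt_XIAGraph (ha.1.differentiableOn (by simp) x hx).hasDerivWithinAt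
    (hb.1.differentiableOn (by simp) x hx).hasDerivWithinAt
    (hf.differentiableOn (by simp) x hx).hasDerivWithinAt
  rw [hd.derivWithin (uniqueDiffOn_Icc hℓ x hx)]
  have hu2 : x ^ (N - 1) ≤ x ^ 2 := pow_le_pow_of_le_one hx.1 hx1 (by omega)
  exact ⟨le_XIA_of_abs_le hx.1 (by nlinarith) (ha.2 x hx).1 (hb.2 x hx).1
    ((hfN x hx).trans (pow_le_pow_of_le_one hx.1 hx1 hN)),
    one_add_le_derivXIA_of_abs_le hx.1 hx1 hMx (ha.2 x hx).1 (ha.2 x hx).2 (hb.2 x hx).1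
      (hb.2 x hx).2 ((hfN x hx).trans (pow_le_pow_of_le_one hx.1 hx1 (by omega)))
      ((hf' x hx).trans (mul_le_mul_of_nonneg_left hu2 hK))⟩

theorem abs_YIAGraph_le_and_abs_derivWithin_le (hℓ : 0 < ℓ) (hN : 3 ≤ N) (hM : 1 ≤ M)
    (hK : lam + (N + 106) * M + 1 ≤ K) (hsmall : 2 * (lam + K + 5) * M * ℓ ≤ 1)
    (hlam : 3 * M * ℓ ≤ lam) (hf : ContDiffOn ℝ ∞ f (Icc 0 ℓ))
    (hfN : ∀ x ∈ Icc 0 ℓ, |f x| ≤ x ^ N)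
    (hf' : ∀ x ∈ Icc 0 ℓ, |derivWithin f (Icc 0 ℓ) x| ≤ K * x ^ (N - 1))
    (hc : BoundedSmoothOn M c (Icc 0 ℓ)) (hd : BoundedSmoothOn M d (Icc 0 ℓ))
    (he : BoundedSmoothOn M e (Icc 0 ℓ)) :
    ∀ x ∈ Icc 0 ℓ, |YIAGraph c d e lam N f x| ≤ x ^ N ∧
      |derivWithin (YIAGraph c d e lam N f) (Icc 0 ℓ) x| ≤ K * x ^ (N - 1) * (1 + x) := by
  intro x hx
  have hlam0 : 0 ≤ lam := le_trans (by positivity) hlam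
  have hK0 : 0 ≤ K := by linarith [mul_nonneg (Nat.cast_nonneg N) (zero_le_one.trans hM)]
  have hYd := hasDerivWithinAt_YIAGraph (lam := lam) (N := N)
    (hc.1.differentiableOn (by simp) x hx).hasDerivWithinAt
    (hd.1.differentiableOn (by simp) x hx).hasDerivWithinAt
    (he.1.differentiableOn (by simp) x hx).hasDerivWithinAt
    (hf.differentiableOn (by simp) x hx).hasDerivWithinAt
  rw [hYd.derivWithin (uniqueDiffOn_Icc hℓ x hx)]
  exact abs_YIA_le_and_abs_derivYIA_le hN hM hK
    (le_trans (mul_le_mul_of_nonneg_left hx.2 (by positivity)) hsmall)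
    (le_trans (mul_le_mul_of_nonneg_left hx.2 (by positivity)) hlam) hx.1 (hfN x hx) (hf' x hx)
    (hc.2 x hx).1 (hc.2 x hx).2 (hd.2 x hx).1 (hd.2 x hx).2 (he.2 x hx).1 (he.2 x hx).2

theorem exists_image_curve_eq_graph (hℓ : 0 < ℓ) (hN : 3 ≤ N) (hM : 1 ≤ M)
    (hK : lam + (N + 106) * M + 1 ≤ K) (hsmall : 2 * (lam + K + 5) * M * ℓ ≤ 1)
    (hlam : 3 * M * ℓ ≤ lam) (hf : ContDiffOn ℝ ∞ f (Icc 0 ℓ))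
    (hfN : ∀ x ∈ Icc 0 ℓ, |f x| ≤ x ^ N)
    (hf' : ∀ x ∈ Icc 0 ℓ, |derivWithin f (Icc 0 ℓ) x| ≤ K * x ^ (N - 1))
    (ha : BoundedSmoothOn M a (Icc 0 ℓ)) (hb : BoundedSmoothOn M b (Icc 0 ℓ))
    (hc : BoundedSmoothOn M c (Icc 0 ℓ)) (hd : BoundedSmoothOn M d (Icc 0 ℓ))
    (he : BoundedSmoothOn M e (Icc 0 ℓ)) :
    ∃ XMAX > (0 : ℝ), ∃ F : ℝ → ℝ, ContDiffOn ℝ ∞ F (Icc 0 XMAX) ∧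
      (fun x => (XIAGraph a b f x, YIAGraph c d e lam N f x)) '' Icc 0 ℓ
        = (fun X => (X, F X)) '' Icc 0 XMAX ∧
      (∀ X ∈ Icc (0 : ℝ) XMAX, |F X| ≤ X ^ N) ∧
      (∀ X ∈ Icc (0 : ℝ) XMAX, |derivWithin F (Icc 0 XMAX) X| ≤ K * X ^ (N - 1)) := by
  have hlam0 : 0 ≤ lam := le_trans (by positivity) hlam
  have hK0 : 0 ≤ K := by linarith [mul_nonneg (Nat.cast_nonneg N) (zero_le_one.trans hM)]
  have hg := self_le_XIAGraph_and_one_add_le_derivWithin hℓ hN hM hK0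
    (by nlinarith [mul_nonneg (mul_nonneg hlam0 (zero_le_one.trans hM)) hℓ.le]) hf hfN hf' ha hb
  have hw := abs_YIAGraph_le_and_abs_derivWithin_le hℓ hN hM hK hsmall hlam hf hfN hf' hc hd he
  have hf0 : f 0 = 0 := abs_nonpos_iff.1 <| by
    simpa [zero_pow (by omega : N ≠ 0)] using hfN 0 ⟨le_rfl, hℓ.le⟩
  have hgC : ContDiffOn ℝ ∞ (XIAGraph a b f) (Icc 0 ℓ) := by
    unfold XIAGraph; have := ha.1; have := hb.1; fun_prop
  have hwC : ContDiffOn ℝ ∞ (YIAGraph c d e lam N f) (Icc 0 ℓ) := by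
    unfold YIAGraph; have := hc.1; have := hd.1; have := he.1; fun_prop
  exact exists_image_eq_graph_of_bounds hℓ hK0 hgC hwC (by simp [XIAGraph, hf0])
    (fun x hx => (hg x hx).1) (fun x hx => (hg x hx).2) (fun x hx => (hw x hx).1)
    (fun x hx => (hw x hx).2)

end Curve

theorem exists_image_graph_IA_eq_graph {θA θB θC θD θE : ℝ × ℝ → ℝ} {U : Set (ℝ × ℝ)}
    {r M K lam ℓ : ℝ} {N : ℕ} {f : ℝ → ℝ} (hU : IsOpen U)
    (hrU : Metric.closedBall (0 : ℝ × ℝ) r ⊆ U)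
    (hθ : ∀ θ ∈ ({θA, θB, θC, θD, θE} : Set (ℝ × ℝ → ℝ)), ContDiffOn ℝ ∞ θ U ∧
      ∀ p ∈ Metric.closedBall (0 : ℝ × ℝ) r, |θ p| ≤ M ∧ ‖fderiv ℝ θ p‖ ≤ M)
    (hℓ : 0 < ℓ) (hℓr : ℓ ≤ r) (hN : 3 ≤ N) (hM : 1 ≤ M) (hK : lam + (N + 106) * M + 1 ≤ K)
    (hsmall : 2 * (lam + K + 5) * M * ℓ ≤ 1) (hlam : 3 * M * ℓ ≤ lam)
    (hf : ContDiffOn ℝ ∞ f (Icc 0 ℓ)) (hfN : ∀ x ∈ Icc 0 ℓ, |f x| ≤ x ^ N)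
    (hf' : ∀ x ∈ Icc 0 ℓ, |derivWithin f (Icc 0 ℓ) x| ≤ K * x ^ (N - 1)) :
    ∃ XMAX > (0 : ℝ), ∃ F : ℝ → ℝ, ContDiffOn ℝ ∞ F (Icc 0 XMAX) ∧
      (fun x => (XIA θA θB x (f x), YIA θC θD θE lam N x (f x))) '' Icc 0 ℓ
        = (fun X => (X, F X)) '' Icc 0 XMAX ∧
      (∀ X ∈ Icc (0 : ℝ) XMAX, |F X| ≤ X ^ N) ∧
      (∀ X ∈ Icc (0 : ℝ) XMAX, |derivWithin F (Icc 0 XMAX) X| ≤ K * X ^ (N - 1)) := by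
  have hlam0 : 0 ≤ lam := le_trans (by positivity) hlam
  have hK0 : 0 ≤ K := by linarith [mul_nonneg (Nat.cast_nonneg N) (zero_le_one.trans hM)]
  have hℓ' : 2 * (lam + K + 5) * ℓ ≤ 1 := by
    nlinarith [mul_nonneg (mul_nonneg (by positivity : 0 ≤ 2 * (lam + K + 5)) hℓ.le)
      (sub_nonneg.2 hM)]
  have hℓ1 : ℓ ≤ 1 := by nlinarith
  have hgraph : ∀ x ∈ Icc 0 ℓ, (x, f x) ∈ Metric.closedBall (0 : ℝ × ℝ) r := fun x hx => by
    have hfx : |f x| ≤ r := (hfN x hx).trans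
      ((pow_le_of_le_one hx.1 (hx.2.trans hℓ1) (by omega)).trans (hx.2.trans hℓr))
    simpa [Prod.norm_def, abs_of_nonneg hx.1] using ⟨hx.2.trans hℓr, hfx⟩
  have hf'1 : ∀ x ∈ Icc 0 ℓ, |derivWithin f (Icc 0 ℓ) x| ≤ 1 := fun x hx => by
    have := (pow_le_of_le_one hx.1 (hx.2.trans hℓ1) (by omega : N - 1 ≠ 0)).trans hx.2
    nlinarith [hf' x hx, mul_le_mul_of_nonneg_left this hK0]
  have hθf : ∀ θ ∈ ({θA, θB, θC, θD, θE} : Set (ℝ × ℝ → ℝ)),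
      BoundedSmoothOn M (fun x => θ (x, f x)) (Icc 0 ℓ) := fun θ hθS =>
    boundedSmoothOn_comp_graph hU (hθ θ hθS).1 hrU (hθ θ hθS).2 (uniqueDiffOn_Icc hℓ) hf
      hgraph hf'1
  exact exists_image_curve_eq_graph hℓ hN hM hK hsmall hlam hf hfN hf' (hθf θA (by simp))
    (hθf θB (by simp)) (hθf θC (by simp)) (hθf θD (by simp)) (hθf θE (by simp))

/-- **Assertion 3.** For `Φ` of the form (IA) there exist `K₁ > 0` and
`δ > 0` such that: if `f` is `C^∞` on `[0, x_MAX]`, `0 < x_MAX ≤ δ`, `|f(x)| ≤ xᴺ`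
and `|f'(x)| ≤ K₁ x^(N-1)` there, then the image of the graph of `f` under `Φ` is the
graph `{(X, F(X)) : X ∈ [0, X_MAX]}` of a `C^∞` function `F` with `|F(X)| ≤ Xᴺ` and
`|F'(X)| ≤ K₁ X^(N-1)` on `[0, X_MAX]`. -/
theorem assertion3
    (θA θB θC θD θE : ℝ × ℝ → ℝ) (V : Set (ℝ × ℝ)) (hV : V ∈ 𝓝 (0 : ℝ × ℝ))
    (hθA : ContDiffOn ℝ (⊤ : ℕ∞) θA V) (hθB : ContDiffOn ℝ (⊤ : ℕ∞) θB V)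
    (hθC : ContDiffOn ℝ (⊤ : ℕ∞) θC V) (hθD : ContDiffOn ℝ (⊤ : ℕ∞) θD V)
    (hθE : ContDiffOn ℝ (⊤ : ℕ∞) θE V)
    (lam : ℝ) (hlam : 0 < lam) (N : ℕ) (hN : 100 ≤ N)
    :
    ∃ K₁ > (0 : ℝ), ∃ δ > (0 : ℝ), ∀ (xMAX : ℝ) (f : ℝ → ℝ),
      0 < xMAX → xMAX ≤ δ →
      ContDiffOn ℝ (⊤ : ℕ∞) f (Icc 0 xMAX) →
      (∀ x ∈ Icc (0 : ℝ) xMAX, |f x| ≤ x ^ N) →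
      (∀ x ∈ Icc (0 : ℝ) xMAX, |derivWithin f (Icc 0 xMAX) x| ≤ K₁ * x ^ (N - 1)) →
      ∃ XMAX > (0 : ℝ), ∃ F : ℝ → ℝ,
        ContDiffOn ℝ (⊤ : ℕ∞) F (Icc 0 XMAX) ∧
        (fun x => (XIA θA θB x (f x), YIA θC θD θE lam N x (f x))) '' Icc 0 xMAX
          = (fun X => (X, F X)) '' Icc 0 XMAX ∧
        (∀ X ∈ Icc (0 : ℝ) XMAX, |F X| ≤ X ^ N) ∧
        (∀ X ∈ Icc (0 : ℝ) XMAX, |derivWithin F (Icc 0 XMAX) X| ≤ K₁ * X ^ (N - 1)) := by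
  obtain ⟨r, hr, hrV⟩ : ∃ r > 0, Metric.closedBall (0 : ℝ × ℝ) r ⊆ interior V :=
    Metric.nhds_basis_closedBall.mem_iff.1 (interior_mem_nhds.2 hV)
  have hS : ∀ θ ∈ ({θA, θB, θC, θD, θE} : Set (ℝ × ℝ → ℝ)), ContDiffOn ℝ ∞ θ (interior V) := by
    rintro θ (rfl | rfl | rfl | rfl | rfl) <;> exact ContDiffOn.mono ‹_› interior_subset
  obtain ⟨M₀, hM₀⟩ := exists_bound_abs_and_norm_fderiv (toFinite _) isOpen_interior
    (isCompact_closedBall 0 r) hrV fun θ hθ => (hS θ hθ).of_le (by simp)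
  set M := max M₀ 1
  set K := lam + (N + 106) * M + 1
  have hK : 0 < K := by positivity
  refine ⟨K, hK, min r (min (lam / (3 * M)) (1 / (2 * (lam + K + 5) * M))),
    lt_min hr (lt_min (by positivity) (by positivity)), fun xMAX f hxM hxδ hf hfN hf' => ?_⟩
  have hxlam := (le_div_iff₀ (by positivity)).1
    (hxδ.trans ((min_le_right _ _).trans (min_le_left _ _)))
  have hxsmall := (le_div_iff₀ (by positivity)).1
    (hxδ.trans ((min_le_right _ _).trans (min_le_right _ _)))
  exact exists_image_graph_IA_eq_graph isOpen_interior hrV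
    (fun θ hθ => ⟨hS θ hθ, fun p hp => ⟨(hM₀ θ hθ p hp).1.trans (le_max_left _ _),
      (hM₀ θ hθ p hp).2.trans (le_max_left _ _)⟩⟩)
    hxM (hxδ.trans (min_le_left _ _)) (by omega) (le_max_right _ _) le_rfl
    (by linarith) (by linarith) hf hfN hf'
end

section
/- (Shadowing Lemma) Let Φ be of the form (IA). There exists δ > 0 (depending on Φ) such that the following holds. Let (x,y), (x̂,ŷ) ∈ ℝ² with 0 < x ≤ δ, |y| ≤ x^N, and (|x − x̂| + x^(−3)|y − ŷ|)/x⁸ ≤ 1. Set (X,Y) = Φ(x,y) and (X̂,Ŷ) = Φ(x̂,ŷ). Then (|X − X̂| + X^(−3)|Y − Ŷ|)/X⁸ ≤ (|x − x̂| + x^(−3)|y − ŷ|)/x⁸ ≤ 1. -/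
/-!
On a small ball around the origin the five `θ`'s are bounded by some `M` and `M`-Lipschitz.
Write `D = |x - x̂| + x⁻³|y - ŷ|`. Since `D ≤ x⁸` and `|y| ≤ xᴺ`, both points lie in that ball,
and expanding the two components of `Φ` gives
`|X - X̂| ≤ (1 + 4x)|x - x̂| + c x² D` and `|Y - Ŷ| ≤ |y - ŷ| + c x⁵ D`;
in the second, `λ > 0` keeps the factor `1 - λx + …` of `y` in `[-1, 1]`, so that the leading
term `|y - ŷ|` is not amplified. Since `X ≥ x + 3x²/4` gives `X⁸ ≥ x⁸ (1 + 5x)`, for `2cx ≤ 1`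
we get `|X - X̂| + X⁻³|Y - Ŷ| ≤ (1 + 5x) D ≤ (X/x)⁸ D`.
-/

open Set Filter Asymptotics Topology

open Metric

theorem abs_mul_sub_mul_le (a b c d : ℝ) : |a * b - c * d| ≤ |a - c| * |b| + |c| * |b - d| :=
  calc |a * b - c * d| = |(a - c) * b + c * (b - d)| := by ring_nf
    _ ≤ |a - c| * |b| + |c| * |b - d| := by
      simpa only [abs_mul] using abs_add_le ((a - c) * b) (c * (b - d))

theorem abs_pow_sub_pow_le_of_abs_le {a b c : ℝ} (n : ℕ) (ha : |a| ≤ c) (hb : |b| ≤ c) :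
    |a ^ n - b ^ n| ≤ n * c ^ (n - 1) * |a - b| :=
  calc |a ^ n - b ^ n| ≤ |a - b| * n * max |a| |b| ^ (n - 1) := abs_pow_sub_pow_le ..
    _ ≤ |a - b| * n * c ^ (n - 1) := by gcongr; exact max_le ha hb
    _ = n * c ^ (n - 1) * |a - b| := by ring

section BoundedLipschitz

variable {E : Type*}

def BoundedLipschitzOn [PseudoMetricSpace E] (C : ℝ) (f : E → ℝ) (s : Set E) : Prop :=
  (∀ p ∈ s, |f p| ≤ C) ∧ ∀ p ∈ s, ∀ q ∈ s, |f p - f q| ≤ C * dist p q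

theorem BoundedLipschitzOn.abs_mul_sub_mul_le [PseudoMetricSpace E] {C : ℝ} {f : E → ℝ}
    {s : Set E} {p q : E} (hf : BoundedLipschitzOn C f s) (hp : p ∈ s) (hq : q ∈ s) (u v : ℝ) :
    |u * f p - v * f q| ≤ C * (|u - v| + |v| * dist p q) :=
  calc |u * f p - v * f q| ≤ |u - v| * |f p| + |v| * |f p - f q| :=
      _root_.abs_mul_sub_mul_le ..
    _ ≤ |u - v| * C + |v| * (C * dist p q) := by
      gcongr
      exacts [hf.1 p hp, hf.2 p hp q hq]
    _ = C * (|u - v| + |v| * dist p q) := by ring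

theorem eventually_boundedLipschitzOn_closedBall [NormedAddCommGroup E]
    [NormedSpace ℝ E] {f : E → ℝ} {a : E} (hf : ContDiffAt ℝ 1 f a) :
    ∀ᶠ Cr : ℝ × ℝ in atTop ×ˢ 𝓝[>] 0, BoundedLipschitzOn Cr.1 f (closedBall a Cr.2) := by
  obtain ⟨K, t, ht, hlip⟩ := hf.exists_lipschitzOnWith
  obtain ⟨ε, hε, hball⟩ := Metric.mem_nhds_iff.1 ht
  filter_upwards [prod_mem_prod (Ici_mem_atTop (max (K : ℝ) (|f a| + K * ε))) (Ioo_mem_nhdsGT hε)]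
  rintro ⟨C, r⟩ ⟨hC, hr0, hrε⟩
  rw [Set.mem_Ici, max_le_iff] at hC
  have hsub : closedBall a r ⊆ t := (closedBall_subset_ball hrε).trans hball
  have hlipK : ∀ p ∈ closedBall a r, ∀ q ∈ closedBall a r, |f p - f q| ≤ K * dist p q :=
    fun p hp q hq => by simpa only [Real.dist_eq] using hlip.dist_le_mul p (hsub hp) q (hsub hq)
  refine ⟨fun p hp => ?_, fun p hp q hq => (hlipK p hp q hq).trans (by gcongr; exact hC.1)⟩
  have hpa : |f p - f a| ≤ K * ε :=
    (hlipK p hp a (mem_closedBall_self hr0.le)).trans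
      (by gcongr; exact (mem_closedBall.1 hp).trans hrε.le)
  linarith [abs_sub_abs_le_abs_sub (f p) (f a), hC.2]

end BoundedLipschitz

noncomputable def weightedDist (x y xh yh : ℝ) : ℝ := |x - xh| + |y - yh| / x ^ 3

section WeightedDist

variable {x y xh yh : ℝ}

theorem weightedDist_nonneg (hx : 0 ≤ x) : 0 ≤ weightedDist x y xh yh := by
  unfold weightedDist; positivity

theorem abs_sub_le_weightedDist (hx : 0 ≤ x) : |x - xh| ≤ weightedDist x y xh yh :=
  le_add_of_nonneg_right (by positivity)

theorem abs_sub_le_pow_mul_weightedDist (hx : 0 < x) :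
    |y - yh| ≤ x ^ 3 * weightedDist x y xh yh :=
  calc |y - yh| = x ^ 3 * (|y - yh| / x ^ 3) := by field_simp
    _ ≤ x ^ 3 * weightedDist x y xh yh := by
      unfold weightedDist; gcongr; exact le_add_of_nonneg_left (abs_nonneg _)

theorem dist_le_weightedDist (hx : 0 < x) (hx1 : x ≤ 1) :
    dist (x, y) (xh, yh) ≤ weightedDist x y xh yh := by
  rw [Prod.dist_eq, Real.dist_eq, Real.dist_eq]
  dsimp only
  refine max_le (abs_sub_le_weightedDist hx.le)
    ((abs_sub_le_pow_mul_weightedDist (xh := xh) hx).trans ?_)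
  exact mul_le_of_le_one_left (weightedDist_nonneg hx.le) (pow_le_one₀ hx.le hx1)

theorem abs_le_two_mul_of_weightedDist_le (hx : 0 < x) (hx1 : x ≤ 1)
    (hwd : weightedDist x y xh yh ≤ x ^ 8) : |xh| ≤ 2 * x := by
  have hx8 : x ^ 8 ≤ x := pow_le_of_le_one hx.le hx1 (by norm_num)
  linarith [abs_sub_abs_le_abs_sub xh x, abs_sub_comm x xh, abs_of_pos hx,
    abs_sub_le_weightedDist (xh := xh) (y := y) (yh := yh) hx.le]

theorem abs_le_two_mul_pow_of_weightedDist_le (hx : 0 < x) (hx1 : x ≤ 1) (hy : |y| ≤ x ^ 5)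
    (hwd : weightedDist x y xh yh ≤ x ^ 8) : |yh| ≤ 2 * x ^ 5 := by
  have hyyh : |y - yh| ≤ x ^ 5 :=
    calc |y - yh| ≤ x ^ 3 * weightedDist x y xh yh := abs_sub_le_pow_mul_weightedDist hx
      _ ≤ x ^ 3 * x ^ 8 := by gcongr
      _ ≤ x ^ 5 := by rw [← pow_add]; exact pow_le_pow_of_le_one hx.le hx1 (by norm_num)
  linarith [abs_sub_abs_le_abs_sub yh y, abs_sub_comm y yh]

theorem abs_sq_sub_sq_le_of_weightedDist_le (hx : 0 < x) (hx1 : x ≤ 1)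
    (hwd : weightedDist x y xh yh ≤ x ^ 8) : |x ^ 2 - xh ^ 2| ≤ 4 * x * |x - xh| := by
  have h := abs_pow_sub_pow_le_of_abs_le 2 (by rw [abs_of_pos hx]; linarith : |x| ≤ 2 * x)
    (abs_le_two_mul_of_weightedDist_le hx hx1 hwd)
  norm_num at h
  linarith

theorem prod_mem_closedBall_zero {a b r : ℝ} (ha : |a| ≤ r) (hb : |b| ≤ r) :
    (a, b) ∈ closedBall (0 : ℝ × ℝ) r := by
  rw [mem_closedBall_zero_iff, Prod.norm_def, Real.norm_eq_abs, Real.norm_eq_abs]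
  exact max_le ha hb

theorem mem_closedBall_of_weightedDist_le {r : ℝ} (hx : 0 < x) (hx1 : 2 * x ≤ 1) (hxr : 2 * x ≤ r)
    (hy : |y| ≤ x ^ 5) (hwd : weightedDist x y xh yh ≤ x ^ 8) :
    (x, y) ∈ closedBall (0 : ℝ × ℝ) r ∧ (xh, yh) ∈ closedBall (0 : ℝ × ℝ) r := by
  have hx5 : x ^ 5 ≤ x := pow_le_of_le_one hx.le (by linarith) (by norm_num)
  refine ⟨prod_mem_closedBall_zero ?_ ?_, prod_mem_closedBall_zero ?_ ?_⟩
  · rw [abs_of_pos hx]; linarith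
  · linarith
  · linarith [abs_le_two_mul_of_weightedDist_le hx (by linarith) hwd]
  · linarith [abs_le_two_mul_pow_of_weightedDist_le hx (by linarith) hy hwd]

theorem weightedDist_div_pow_le_of_le {X Y Xh Yh c₁ c₂ : ℝ} (hx : 0 < x)
    (hX : x + 3 / 4 * x ^ 2 ≤ X) (hc : (c₁ + c₂) * x ≤ 1)
    (hdX : |X - Xh| ≤ (1 + 4 * x) * |x - xh| + c₁ * x ^ 2 * weightedDist x y xh yh)
    (hdY : |Y - Yh| ≤ |y - yh| + c₂ * x ^ 5 * weightedDist x y xh yh) :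
    weightedDist X Y Xh Yh / X ^ 8 ≤ weightedDist x y xh yh / x ^ 8 := by
  set D := weightedDist x y xh yh
  have hD_eq : D = |x - xh| + |y - yh| / x ^ 3 := rfl
  have hD0 : 0 ≤ D := weightedDist_nonneg hx.le
  have hxX : x ≤ X := by nlinarith
  have hdY' : |Y - Yh| / X ^ 3 ≤ |y - yh| / x ^ 3 + c₂ * x ^ 2 * D :=
    calc |Y - Yh| / X ^ 3 ≤ |Y - Yh| / x ^ 3 := by gcongr
      _ ≤ (|y - yh| + c₂ * x ^ 5 * D) / x ^ 3 := by gcongr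
      _ = |y - yh| / x ^ 3 + c₂ * x ^ 2 * D := by field_simp
  have hsum : weightedDist X Y Xh Yh ≤ (1 + 5 * x) * D := by
    have hxD : x * |x - xh| ≤ x * D := by gcongr; exact abs_sub_le_weightedDist hx.le
    have hcD : (c₁ + c₂) * x * (x * D) ≤ x * D := by
      nlinarith [mul_nonneg hx.le hD0]
    unfold weightedDist
    linarith
  have hX8 : x ^ 8 * (1 + 5 * x) ≤ X ^ 8 :=
    calc x ^ 8 * (1 + 5 * x) ≤ x ^ 8 * (1 + 5 * x / 8) ^ 8 := by
          gcongr; linarith [one_add_mul_le_pow (a := 5 * x / 8) (by linarith) 8]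
      _ = (x * (1 + 5 * x / 8)) ^ 8 := by ring
      _ ≤ X ^ 8 := by gcongr; nlinarith
  rw [div_le_div_iff₀ (pow_pos (hx.trans_le hxX) 8) (by positivity)]
  calc weightedDist X Y Xh Yh * x ^ 8 ≤ D * (x ^ 8 * (1 + 5 * x)) := by
        nlinarith [pow_pos hx 8]
    _ ≤ D * X ^ 8 := by gcongr

end WeightedDist

noncomputable def bracketIA (θC θD : ℝ × ℝ → ℝ) (lam x y : ℝ) : ℝ :=
  1 - lam * x + y * θC (x, y) + x ^ 2 * θD (x, y)

section FormIA

variable {f θA θB θC θD θE : ℝ × ℝ → ℝ} {s : Set (ℝ × ℝ)} {lam M : ℝ} {N : ℕ} {x y xh yh : ℝ}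

theorem YIA_eq_bracketIA :
    YIA θC θD θE lam N x y = -y * bracketIA θC θD lam x y + x ^ (N + 100) * θE (x, y) := rfl

theorem BoundedLipschitzOn.abs_snd_mul_sub_le (hf : BoundedLipschitzOn M f s) (hp : (x, y) ∈ s)
    (hq : (xh, yh) ∈ s) (hM : 0 ≤ M) (hx : 0 < x) (hx2 : 2 * x ≤ 1) (hy : |y| ≤ x ^ 5)
    (hwd : weightedDist x y xh yh ≤ x ^ 8) :
    |y * f (x, y) - yh * f (xh, yh)| ≤ 2 * M * x ^ 2 * weightedDist x y xh yh := by
  have hx1 : x ≤ 1 := by linarith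
  have h3 : x ^ 3 ≤ x ^ 2 := pow_le_pow_of_le_one hx.le hx1 (by norm_num)
  have h5 : 2 * x ^ 5 ≤ x ^ 2 := by nlinarith [pow_le_pow_of_le_one hx.le hx1 (by norm_num : 3 ≤ 4)]
  calc _ ≤ M * (|y - yh| + |yh| * dist (x, y) (xh, yh)) := hf.abs_mul_sub_mul_le hp hq _ _
    _ ≤ M * (x ^ 3 * weightedDist x y xh yh + 2 * x ^ 5 * weightedDist x y xh yh) := by
        gcongr
        exacts [abs_sub_le_pow_mul_weightedDist hx,
          abs_le_two_mul_pow_of_weightedDist_le hx hx1 hy hwd, dist_le_weightedDist hx hx1]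
    _ ≤ 2 * M * x ^ 2 * weightedDist x y xh yh := by
        have hMD := mul_nonneg hM (weightedDist_nonneg (y := y) (xh := xh) (yh := yh) hx.le)
        nlinarith [mul_le_mul_of_nonneg_left (add_le_add h3 h5) hMD]

theorem add_le_XIA (hA : BoundedLipschitzOn M θA s) (hB : BoundedLipschitzOn M θB s)
    (hp : (x, y) ∈ s) (hx : 0 < x) (hx1 : x ≤ 1) (hy : |y| ≤ x ^ 5) (hMx : 8 * M * x ≤ 1) :
    x + 3 / 4 * x ^ 2 ≤ XIA θA θB x y := by
  have hA' : |x ^ 3 * θA (x, y)| ≤ x ^ 3 * M := by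
    rw [abs_mul, abs_of_pos (by positivity)]; gcongr; exact hA.1 _ hp
  have hB' : |y * θB (x, y)| ≤ x ^ 3 * M := by
    rw [abs_mul]
    exact mul_le_mul (hy.trans (pow_le_pow_of_le_one hx.le hx1 (by norm_num))) (hB.1 _ hp)
      (abs_nonneg _) (by positivity)
  have hM : x ^ 3 * M * 8 ≤ x ^ 2 := by nlinarith [sq_nonneg x]
  unfold XIA
  linarith [neg_abs_le (x ^ 3 * θA (x, y)), neg_abs_le (y * θB (x, y))]

theorem abs_XIA_sub_le (hA : BoundedLipschitzOn M θA s) (hB : BoundedLipschitzOn M θB s)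
    (hp : (x, y) ∈ s) (hq : (xh, yh) ∈ s) (hM : 0 ≤ M) (hx : 0 < x) (hx2 : 2 * x ≤ 1)
    (hy : |y| ≤ x ^ 5) (hwd : weightedDist x y xh yh ≤ x ^ 8) :
    |XIA θA θB x y - XIA θA θB xh yh|
      ≤ (1 + 4 * x) * |x - xh| + 18 * M * x ^ 2 * weightedDist x y xh yh := by
  set D := weightedDist x y xh yh
  have hx1 : x ≤ 1 := by linarith
  have hxh : |xh| ≤ 2 * x := abs_le_two_mul_of_weightedDist_le hx hx1 hwd
  have hdist : dist (x, y) (xh, yh) ≤ D := dist_le_weightedDist hx hx1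
  have hxxh : |x - xh| ≤ D := abs_sub_le_weightedDist hx.le
  have hxabs : |x| ≤ 2 * x := by rw [abs_of_pos hx]; linarith
  have hsq := abs_sq_sub_sq_le_of_weightedDist_le hx hx1 hwd
  have hA' : |x ^ 3 * θA (x, y) - xh ^ 3 * θA (xh, yh)| ≤ M * (16 * x ^ 2 * D) := by
    have h3 := abs_pow_sub_pow_le_of_abs_le 3 hxabs hxh
    have hxh3 : |xh ^ 3| ≤ 4 * x ^ 2 := by
      rw [abs_pow]; nlinarith [pow_le_pow_left₀ (abs_nonneg xh) hxh 3]
    calc _ ≤ M * (|x ^ 3 - xh ^ 3| + |xh ^ 3| * dist (x, y) (xh, yh)) :=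
          hA.abs_mul_sub_mul_le hp hq _ _
      _ ≤ M * (12 * x ^ 2 * D + 4 * x ^ 2 * D) := by
          gcongr
          norm_num at h3; nlinarith
      _ = M * (16 * x ^ 2 * D) := by ring
  have hB' := hB.abs_snd_mul_sub_le hp hq hM hx hx2 hy hwd
  have e : XIA θA θB x y - XIA θA θB xh yh = (x - xh) + (x ^ 2 - xh ^ 2)
      + (x ^ 3 * θA (x, y) - xh ^ 3 * θA (xh, yh)) + (y * θB (x, y) - yh * θB (xh, yh)) := by
    unfold XIA; ring
  rw [e]
  linarith [abs_add_le ((x - xh) + (x ^ 2 - xh ^ 2) + (x ^ 3 * θA (x, y) - xh ^ 3 * θA (xh, yh)))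
    (y * θB (x, y) - yh * θB (xh, yh)), abs_add_three (x - xh) (x ^ 2 - xh ^ 2)
    (x ^ 3 * θA (x, y) - xh ^ 3 * θA (xh, yh))]

theorem abs_bracketIA_le_one (hC : BoundedLipschitzOn M θC s) (hD : BoundedLipschitzOn M θD s)
    (hp : (x, y) ∈ s) (hx : 0 < x) (hx1 : x ≤ 1) (hy : |y| ≤ x ^ 5) (hMx : 2 * M * x ≤ lam)
    (hlamx : lam * x ≤ 1) : |bracketIA θC θD lam x y| ≤ 1 := by
  have hC' : |y * θC (x, y)| ≤ x ^ 2 * M := by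
    rw [abs_mul]
    exact mul_le_mul (hy.trans (pow_le_pow_of_le_one hx.le hx1 (by norm_num))) (hC.1 _ hp)
      (abs_nonneg _) (by positivity)
  have hD' : |x ^ 2 * θD (x, y)| ≤ x ^ 2 * M := by
    rw [abs_mul, abs_of_pos (by positivity)]; gcongr; exact hD.1 _ hp
  have hM : 2 * (x ^ 2 * M) ≤ lam * x := by nlinarith
  unfold bracketIA
  rw [abs_le]
  constructor <;> linarith [abs_le.1 hC', abs_le.1 hD']

theorem abs_bracketIA_sub_le (hC : BoundedLipschitzOn M θC s) (hD : BoundedLipschitzOn M θD s)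
    (hp : (x, y) ∈ s) (hq : (xh, yh) ∈ s) (hM : 0 ≤ M) (hlam : 0 ≤ lam) (hx : 0 < x)
    (hx2 : 2 * x ≤ 1) (hy : |y| ≤ x ^ 5) (hwd : weightedDist x y xh yh ≤ x ^ 8) :
    |bracketIA θC θD lam x y - bracketIA θC θD lam xh yh|
      ≤ (lam + 5 * M) * weightedDist x y xh yh := by
  set D := weightedDist x y xh yh
  have hx1 : x ≤ 1 := by linarith
  have hD0 : 0 ≤ D := weightedDist_nonneg hx.le
  have hxxh : |x - xh| ≤ D := abs_sub_le_weightedDist hx.le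
  have hC' := hC.abs_snd_mul_sub_le hp hq hM hx hx2 hy hwd
  have hD' : |x ^ 2 * θD (x, y) - xh ^ 2 * θD (xh, yh)| ≤ 3 * M * D :=
    calc _ ≤ M * (|x ^ 2 - xh ^ 2| + |xh ^ 2| * dist (x, y) (xh, yh)) :=
          hD.abs_mul_sub_mul_le hp hq _ _
      _ ≤ M * (4 * x * D + 4 * x ^ 2 * D) := by
          gcongr
          · exact (abs_sq_sub_sq_le_of_weightedDist_le hx hx1 hwd).trans (by gcongr)
          · rw [abs_pow]
            nlinarith [abs_nonneg xh, abs_le_two_mul_of_weightedDist_le hx hx1 hwd]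
          · exact dist_le_weightedDist hx hx1
      _ ≤ 3 * M * D := by
          have : 4 * x + 4 * x ^ 2 ≤ 3 := by nlinarith
          nlinarith [mul_le_mul_of_nonneg_left this (mul_nonneg hM hD0)]
  have e : bracketIA θC θD lam x y - bracketIA θC θD lam xh yh = -(lam * (x - xh))
      + (y * θC (x, y) - yh * θC (xh, yh)) + (x ^ 2 * θD (x, y) - xh ^ 2 * θD (xh, yh)) := by
    unfold bracketIA; ring
  have hlam' : |-(lam * (x - xh))| ≤ lam * D := by
    rw [abs_neg, abs_mul, abs_of_nonneg hlam]; gcongr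
  have hx2D : 2 * M * x ^ 2 * D ≤ 2 * M * D := by
    nlinarith [mul_le_mul_of_nonneg_left (pow_le_one₀ (n := 2) hx.le hx1) (mul_nonneg hM hD0)]
  rw [e]
  linarith [abs_add_three (-(lam * (x - xh))) (y * θC (x, y) - yh * θC (xh, yh))
    (x ^ 2 * θD (x, y) - xh ^ 2 * θD (xh, yh))]

theorem abs_YIA_sub_le (hC : BoundedLipschitzOn M θC s) (hD : BoundedLipschitzOn M θD s)
    (hE : BoundedLipschitzOn M θE s) (hp : (x, y) ∈ s) (hq : (xh, yh) ∈ s) (hM : 0 ≤ M)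
    (hlam : 0 ≤ lam) (hx : 0 < x) (hx2 : 2 * x ≤ 1) (hy : |y| ≤ x ^ 5)
    (hwd : weightedDist x y xh yh ≤ x ^ 8) (hMx : 2 * M * x ≤ lam) (hlamx : lam * x ≤ 1) :
    |YIA θC θD θE lam N x y - YIA θC θD θE lam N xh yh|
      ≤ |y - yh| + (2 * (lam + 5 * M) + 32 * (N + 101) * M) * x ^ 5 * weightedDist x y xh yh := by
  set D := weightedDist x y xh yh
  have hx1 : x ≤ 1 := by linarith
  have hxh : |xh| ≤ 2 * x := abs_le_two_mul_of_weightedDist_le hx hx1 hwd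
  have hyh : |yh| ≤ 2 * x ^ 5 := abs_le_two_mul_pow_of_weightedDist_le hx hx1 hy hwd
  have hxabs : |x| ≤ 2 * x := by rw [abs_of_pos hx]; linarith
  have hbracket : |y * bracketIA θC θD lam x y - yh * bracketIA θC θD lam xh yh|
      ≤ |y - yh| + 2 * (lam + 5 * M) * x ^ 5 * D :=
    calc _ ≤ |y - yh| * |bracketIA θC θD lam x y|
          + |yh| * |bracketIA θC θD lam x y - bracketIA θC θD lam xh yh| :=
          abs_mul_sub_mul_le ..
      _ ≤ |y - yh| * 1 + 2 * x ^ 5 * ((lam + 5 * M) * D) := by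
          gcongr
          · exact abs_bracketIA_le_one hC hD hp hx hx1 hy hMx hlamx
          · exact abs_bracketIA_sub_le hC hD hp hq hM hlam hx hx2 hy hwd
      _ = |y - yh| + 2 * (lam + 5 * M) * x ^ 5 * D := by ring
  have hpow : ∀ m, 5 ≤ m → (2 * x) ^ m ≤ 32 * x ^ 5 := fun m hm =>
    calc (2 * x) ^ m ≤ (2 * x) ^ 5 := pow_le_pow_of_le_one (by positivity) hx2 hm
      _ = 32 * x ^ 5 := by ring
  have hE' : |x ^ (N + 100) * θE (x, y) - xh ^ (N + 100) * θE (xh, yh)|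
      ≤ 32 * (N + 101) * M * x ^ 5 * D :=
    calc _ ≤ M * (|x ^ (N + 100) - xh ^ (N + 100)| + |xh ^ (N + 100)| * dist (x, y) (xh, yh)) :=
          hE.abs_mul_sub_mul_le hp hq _ _
      _ ≤ M * ((N + 100 : ℕ) * (32 * x ^ 5) * D + 32 * x ^ 5 * D) := by
          gcongr
          · exact (abs_pow_sub_pow_le_of_abs_le _ hxabs hxh).trans
              (by gcongr; exacts [hpow _ (by omega), abs_sub_le_weightedDist hx.le])
          · rw [abs_pow]
            exact (pow_le_pow_left₀ (abs_nonneg _) hxh _).trans (hpow _ (by omega))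
          · exact dist_le_weightedDist hx hx1
      _ = 32 * (N + 101) * M * x ^ 5 * D := by push_cast; ring
  rw [YIA_eq_bracketIA, YIA_eq_bracketIA]
  have e : -y * bracketIA θC θD lam x y + x ^ (N + 100) * θE (x, y)
      - (-yh * bracketIA θC θD lam xh yh + xh ^ (N + 100) * θE (xh, yh))
      = -(y * bracketIA θC θD lam x y - yh * bracketIA θC θD lam xh yh)
        + (x ^ (N + 100) * θE (x, y) - xh ^ (N + 100) * θE (xh, yh)) := by ring
  rw [e]
  refine (abs_add_le _ _).trans ?_
  rw [abs_neg]
  linarith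

end FormIA

/-- **Shadowing Lemma.** For `Φ` of the form (IA) there is `δ > 0` such
that if `0 < x ≤ δ`, `|y| ≤ xᴺ` and `(|x - x̂| + x⁻³|y - ŷ|)/x⁸ ≤ 1`, then, writing
`(X,Y) = Φ(x,y)` and `(X̂,Ŷ) = Φ(x̂,ŷ)`,
`(|X - X̂| + X⁻³|Y - Ŷ|)/X⁸ ≤ (|x - x̂| + x⁻³|y - ŷ|)/x⁸ ≤ 1`. -/
theorem shadowing_lemma
    (θA θB θC θD θE : ℝ × ℝ → ℝ) (V : Set (ℝ × ℝ)) (hV : V ∈ 𝓝 (0 : ℝ × ℝ))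
    (hθA : ContDiffOn ℝ (⊤ : ℕ∞) θA V) (hθB : ContDiffOn ℝ (⊤ : ℕ∞) θB V)
    (hθC : ContDiffOn ℝ (⊤ : ℕ∞) θC V) (hθD : ContDiffOn ℝ (⊤ : ℕ∞) θD V)
    (hθE : ContDiffOn ℝ (⊤ : ℕ∞) θE V)
    (lam : ℝ) (hlam : 0 < lam) (N : ℕ) (hN : 100 ≤ N)
    :
    ∃ δ > (0 : ℝ), ∀ x y xh yh : ℝ,
      0 < x → x ≤ δ → |y| ≤ x ^ N →
      (|x - xh| + |y - yh| / x ^ 3) / x ^ 8 ≤ 1 →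
      (|XIA θA θB x y - XIA θA θB xh yh|
          + |YIA θC θD θE lam N x y - YIA θC θD θE lam N xh yh| / (XIA θA θB x y) ^ 3)
          / (XIA θA θB x y) ^ 8
        ≤ (|x - xh| + |y - yh| / x ^ 3) / x ^ 8 ∧
      (|x - xh| + |y - yh| / x ^ 3) / x ^ 8 ≤ 1 := by
  have bounds : ∀ θ : ℝ × ℝ → ℝ, ContDiffOn ℝ (⊤ : ℕ∞) θ V →
      ∀ᶠ Mr : ℝ × ℝ in atTop ×ˢ 𝓝[>] 0, BoundedLipschitzOn Mr.1 θ (closedBall 0 Mr.2) :=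
    fun θ hθ => eventually_boundedLipschitzOn_closedBall
      ((hθ.contDiffAt hV).of_le (by exact_mod_cast le_top))
  obtain ⟨⟨M, r⟩, hM, hr, hA, hB, hC, hD, hE⟩ :=
    (((eventually_gt_atTop 0).prod_inl _).and <| (eventually_mem_nhdsWithin.prod_inr _).and <|
      (bounds θA hθA).and <| (bounds θB hθB).and <| (bounds θC hθC).and <|
      (bounds θD hθD).and (bounds θE hθE)).exists
  simp only [Set.mem_Ioi] at hM hr hA hB hC hD hE
  set c := 18 * M + (2 * (lam + 5 * M) + 32 * (N + 101) * M)
  have hc : 0 < c := by positivity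
  refine ⟨min (min (1 / 2) (r / 2)) (min (min (1 / (8 * M)) (lam / (2 * M)))
    (min (1 / lam) (1 / c))), by positivity, fun x y xh yh hx hxδ hy hdist => ⟨?_, hdist⟩⟩
  simp only [le_min_iff] at hxδ
  obtain ⟨⟨hx2, hxr⟩, ⟨hMx, hMlam⟩, hlamx, hcx⟩ := hxδ
  rw [le_div_iff₀' two_pos] at hx2 hxr
  rw [le_div_iff₀' (by positivity)] at hMx hMlam hcx
  rw [le_div_iff₀' hlam] at hlamx
  have hy5 : |y| ≤ x ^ 5 := hy.trans (pow_le_pow_of_le_one hx.le (by linarith) (by omega))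
  have hwd : weightedDist x y xh yh ≤ x ^ 8 := (div_le_one (pow_pos hx 8)).1 hdist
  obtain ⟨hp, hq⟩ := mem_closedBall_of_weightedDist_le hx hx2 hxr hy5 hwd
  exact weightedDist_div_pow_le_of_le hx (add_le_XIA hA hB hp hx (by linarith) hy5 hMx) hcx
    (abs_XIA_sub_le hA hB hp hq hM.le hx hx2 hy5 hwd)
    (abs_YIA_sub_le hC hD hE hp hq hM.le hlam.le hx hx2 hy5 hwd hMlam hlamx)
end

section
/- Let Φ be a C¹ (indeed C^N, N large) local diffeomorphism near the origin in ℝ² of the form Φ(x,y) = (X,Y) with X = x + x² + μxy + O(|(x,y)|³) and Y = −y(1 − λx + O(|(x,y)|²)), where μ ∈ ℝ and λ > 0. Then the second iterate of the inverse map Φ^(−2) has the form (x,y) ↦ (X,Y) with X = x − 2x² + O(|(x,y)|³) and Y = y(1 + 2λx + O(|(x,y)|²)) as (x,y) → 0; in particular the term μxy contributes only O(|(x,y)|³) to Φ^(−2). -/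
/-!
Write `L(x, y) = (x, -y)`. The hypotheses say `Φ = L + O(|p|²)`, so the local inverse `Ψ` is
also `L + O(|p|²)`: its deviation from `L⁻¹` is `o(Ψ)`, which forces `Ψ = O(p)`. Substituting
`p = Φ(Ψ p)` into the second-order terms gives `Ψ(x, y) = (x - x² + μxy + O(|p|³), ·)`, and,
because the second coordinate of `Φ` is `y` times a unit, `Ψ₂ = -y (1 + λx + O(|p|²))`.
Composing `Ψ` with itself, the `x²` and `λx` terms double while the two `μxy` terms cancel,
since the inner `Ψ` flips the sign of `y`.
-/

open Set Filter Asymptotics Topology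

section RightInverse

variable {E F : Type*} [NormedAddCommGroup E] [NormedAddCommGroup F]

theorem isBigO_norm_sq_norm : (fun x : E => ‖x‖ ^ 2) =O[𝓝 0] fun x => ‖x‖ := by
  simpa using (isLittleO_norm_pow_norm_pow (E' := E) one_lt_two).isBigO

theorem Asymptotics.IsBigO.comp_of_isBigO_id {G : Type*} [Norm G] {f : F → G} {Ψ : E → F}
    {k : ℕ} (hf : f =O[𝓝 0] fun q => ‖q‖ ^ k) (hΨ : Ψ =O[𝓝 0] fun p => p) :
    (fun p => f (Ψ p)) =O[𝓝 0] fun p => ‖p‖ ^ k :=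
  (hf.comp_tendsto (hΨ.trans_tendsto tendsto_id)).trans (hΨ.norm_norm.pow k)

variable {𝕜 : Type*} [NontriviallyNormedField 𝕜] [NormedSpace 𝕜 E] [NormedSpace 𝕜 F]

theorem isBigO_sub_symm_of_rightInverse {Φ : E → F} {Ψ : F → E} (A : E ≃L[𝕜] F)
    (hΦ : (fun q => Φ q - A q) =O[𝓝 0] fun q => ‖q‖ ^ 2) (hΨ : Tendsto Ψ (𝓝 0) (𝓝 0))
    (hΦΨ : ∀ᶠ p in 𝓝 0, Φ (Ψ p) = p) :
    (fun p => Ψ p - A.symm p) =O[𝓝 0] fun p => ‖p‖ ^ 2 := by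
  have hsub : (fun p => Ψ p - A.symm p) =ᶠ[𝓝 0] fun p => -A.symm (Φ (Ψ p) - A (Ψ p)) := by
    filter_upwards [hΦΨ] with p hp
    rw [hp, map_sub, A.symm_apply_apply, neg_sub]
  have hrem : (fun p => -A.symm (Φ (Ψ p) - A (Ψ p))) =O[𝓝 0] fun p => ‖Ψ p‖ ^ 2 :=
    ((A.symm : F →L[𝕜] E).isBigO_comp _ _).neg_left.trans (hΦ.comp_tendsto hΨ)
  have hΨO : Ψ =O[𝓝 0] fun p => p := by
    have hsmall : (fun p => Ψ p - A.symm p) =o[𝓝 0] Ψ :=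
      hsub.trans_isLittleO <|
        hrem.trans_isLittleO ((isLittleO_norm_pow_id one_lt_two).comp_tendsto hΨ)
    exact (hsmall.right_isBigO_sub.congr_right fun p => sub_sub_cancel _ _).trans
      ((A.symm : F →L[𝕜] E).isBigO_id (𝓝 0))
  exact hsub.trans_isBigO (hrem.trans (hΨO.norm_norm.pow 2))

end RightInverse

section Scalar

theorem isBigO_mul_sub_mul {α : Type*} {l : Filter α} {f₁ f₂ g₁ g₂ u : α → ℝ}
    (hf₁ : f₁ =O[l] u) (hg₂ : g₂ =O[l] u)
    (h₁ : (fun x => f₁ x - g₁ x) =O[l] fun x => u x ^ 2)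
    (h₂ : (fun x => f₂ x - g₂ x) =O[l] fun x => u x ^ 2) :
    (fun x => f₁ x * f₂ x - g₁ x * g₂ x) =O[l] fun x => u x ^ 3 :=
  ((hf₁.mul h₂).add ((h₁.mul hg₂).congr_right fun x => mul_comm _ _)).congr
    (fun x => by ring) (fun x => by ring)

variable {E : Type*} [NormedAddCommGroup E] {D L : E → ℝ}

theorem tendsto_one_of_isBigO_sub_one_add (hL : L =O[𝓝 0] fun x => ‖x‖)
    (hD : (fun x => D x - (1 + L x)) =O[𝓝 0] fun x => ‖x‖ ^ 2) :
    Tendsto D (𝓝 0) (𝓝 1) := by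
  have hsq : Tendsto (fun x : E => ‖x‖ ^ 2) (𝓝 0) (𝓝 0) := by
    simpa using tendsto_norm_zero.pow 2
  have h := ((hD.trans_tendsto hsq).add (hL.trans_tendsto tendsto_norm_zero)).const_add 1
  rw [add_zero, add_zero] at h
  exact h.congr fun x => by ring

theorem isBigO_inv_sub_one_sub (hL : L =O[𝓝 0] fun x => ‖x‖)
    (hD : (fun x => D x - (1 + L x)) =O[𝓝 0] fun x => ‖x‖ ^ 2) :
    (fun x => (D x)⁻¹ - (1 - L x)) =O[𝓝 0] fun x => ‖x‖ ^ 2 := by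
  have hD1 := tendsto_one_of_isBigO_sub_one_add hL hD
  have hDsub : (fun x => D x - 1) =O[𝓝 0] fun x => ‖x‖ :=
    ((hD.trans isBigO_norm_sq_norm).add hL).congr_left fun x => by ring
  have hnum : (fun x => L x * (D x - 1) - (D x - (1 + L x))) =O[𝓝 0] fun x => ‖x‖ ^ 2 :=
    ((hL.mul hDsub).congr_right fun x => (sq _).symm).sub hD
  have hinv : (fun x => (D x)⁻¹) =O[𝓝 0] fun _ => (1 : ℝ) :=
    (hD1.inv₀ one_ne_zero).isBigO_one ℝ
  refine ((hinv.mul hnum).congr_right fun x => one_mul _).congr' ?_ EventuallyEq.rfl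
  filter_upwards [hD1.eventually_ne one_ne_zero] with x hx
  field_simp
  ring

end Scalar

def negSnd : (ℝ × ℝ) ≃L[ℝ] ℝ × ℝ :=
  (ContinuousLinearEquiv.refl ℝ ℝ).prodCongr (ContinuousLinearEquiv.neg ℝ)

theorem isBigO_fst_norm {l : Filter (ℝ × ℝ)} : (fun p : ℝ × ℝ => p.1) =O[l] fun p => ‖p‖ :=
  isBigO_norm_right.2 isBigO_fst_prod'

theorem isBigO_snd_norm {l : Filter (ℝ × ℝ)} : (fun p : ℝ × ℝ => p.2) =O[l] fun p => ‖p‖ :=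
  isBigO_norm_right.2 isBigO_snd_prod'

def HasLinearPartNegSnd (F : ℝ × ℝ → ℝ × ℝ) : Prop :=
  (fun p => F p - negSnd p) =O[𝓝 0] fun p => ‖p‖ ^ 2

def FstExpansion (F : ℝ × ℝ → ℝ × ℝ) (a b : ℝ) : Prop :=
  (fun p : ℝ × ℝ => (F p).1 - (p.1 + a * p.1 ^ 2 + b * p.1 * p.2)) =O[𝓝 0] fun p => ‖p‖ ^ 3

def SndExpansion (F : ℝ × ℝ → ℝ × ℝ) (c k : ℝ) : Prop :=
  ∃ E : ℝ × ℝ → ℝ, E =O[𝓝 0] (fun p => ‖p‖ ^ 2) ∧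
    ∀ᶠ p in 𝓝 0, (F p).2 = c * p.2 * (1 + k * p.1 + E p)

section Planar

variable {F G Φ Ψ : ℝ × ℝ → ℝ × ℝ}

theorem hasLinearPartNegSnd_iff : HasLinearPartNegSnd F ↔
    ((fun p => (F p).1 - p.1) =O[𝓝 0] fun p => ‖p‖ ^ 2) ∧
      (fun p => (F p).2 - -p.2) =O[𝓝 0] fun p => ‖p‖ ^ 2 :=
  isBigO_prod_left

namespace HasLinearPartNegSnd

theorem fst_sub (hF : HasLinearPartNegSnd F) :
    (fun p => (F p).1 - p.1) =O[𝓝 0] fun p => ‖p‖ ^ 2 :=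
  (hasLinearPartNegSnd_iff.1 hF).1

theorem snd_sub (hF : HasLinearPartNegSnd F) :
    (fun p => (F p).2 - -p.2) =O[𝓝 0] fun p => ‖p‖ ^ 2 :=
  (hasLinearPartNegSnd_iff.1 hF).2

theorem isBigO_id (hF : HasLinearPartNegSnd F) : F =O[𝓝 0] fun p => p :=
  ((isBigO_norm_right.1 (hF.trans isBigO_norm_sq_norm)).add
    ((negSnd : (ℝ × ℝ) →L[ℝ] ℝ × ℝ).isBigO_id _)).congr_left fun _ => sub_add_cancel _ _

theorem fst (hF : HasLinearPartNegSnd F) : (fun p => (F p).1) =O[𝓝 0] fun p => ‖p‖ :=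
  isBigO_norm_right.2 (isBigO_fst_prod'.trans hF.isBigO_id)

theorem tendsto (hF : HasLinearPartNegSnd F) : Tendsto F (𝓝 0) (𝓝 0) :=
  hF.isBigO_id.trans_tendsto tendsto_id

end HasLinearPartNegSnd

namespace SndExpansion

variable {c c' k k' : ℝ}

theorem snd_sub (hF : SndExpansion F c k) :
    (fun p => (F p).2 - c * p.2) =O[𝓝 0] fun p => ‖p‖ ^ 2 := by
  obtain ⟨E, hE, hF2⟩ := hF
  have hprod : (fun p => c * p.2 * (k * p.1 + E p)) =O[𝓝 0] fun p => ‖p‖ ^ 2 :=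
    (((isBigO_snd_norm.const_mul_left c).mul
      ((isBigO_fst_norm.const_mul_left k).add (hE.trans isBigO_norm_sq_norm))).congr_right
        fun p => (sq _).symm)
  refine hprod.congr' ?_ EventuallyEq.rfl
  filter_upwards [hF2] with p hp
  rw [hp]
  ring

theorem rightInverse (hΦ : SndExpansion Φ c k) (hc : c ≠ 0) (hΨlin : HasLinearPartNegSnd Ψ)
    (hΦΨ : ∀ᶠ p in 𝓝 0, Φ (Ψ p) = p) : SndExpansion Ψ c⁻¹ (-k) := by
  obtain ⟨E, hE, hΦ2⟩ := hΦ
  set D : ℝ × ℝ → ℝ := fun p => 1 + k * (Ψ p).1 + E (Ψ p)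
  have hL : (fun p : ℝ × ℝ => k * p.1) =O[𝓝 0] fun p => ‖p‖ := isBigO_fst_norm.const_mul_left k
  have hD : (fun p => D p - (1 + k * p.1)) =O[𝓝 0] fun p => ‖p‖ ^ 2 :=
    ((hΨlin.fst_sub.const_mul_left k).add (hE.comp_of_isBigO_id hΨlin.isBigO_id)).congr_left
      fun p => by simp only [D]; ring
  refine ⟨fun p => (D p)⁻¹ - (1 - k * p.1), isBigO_inv_sub_one_sub hL hD, ?_⟩
  filter_upwards [hΦΨ, hΨlin.tendsto.eventually hΦ2,
    (tendsto_one_of_isBigO_sub_one_add hL hD).eventually_ne one_ne_zero] with p hp hΦ2p hDp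
  rw [hp] at hΦ2p
  simp only [D] at hΦ2p hDp ⊢
  field_simp
  rw [hΦ2p]
  ring

theorem comp (hF : SndExpansion F c k) (hG : SndExpansion G c' k')
    (hGlin : HasLinearPartNegSnd G) : SndExpansion (fun p => F (G p)) (c * c') (k + k') := by
  obtain ⟨EF, hEF, hF2⟩ := hF
  obtain ⟨EG, hEG, hG2⟩ := hG
  have hEFG := hEF.comp_of_isBigO_id hGlin.isBigO_id
  have hfac : (fun p => (k' * p.1 + EG p) * (k * (G p).1 + EF (G p)))
      =O[𝓝 0] fun p => ‖p‖ ^ 2 :=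
    ((((isBigO_fst_norm.const_mul_left k').add (hEG.trans isBigO_norm_sq_norm)).mul
      ((hGlin.fst.const_mul_left k).add (hEFG.trans isBigO_norm_sq_norm))).congr_right
        fun p => (sq _).symm)
  refine ⟨fun p => EG p + k * ((G p).1 - p.1) + EF (G p) +
    (k' * p.1 + EG p) * (k * (G p).1 + EF (G p)),
    ((hEG.add (hGlin.fst_sub.const_mul_left k)).add hEFG).add hfac, ?_⟩
  filter_upwards [hG2, hGlin.tendsto.eventually hF2] with p hG2p hF2p
  rw [hF2p, hG2p]
  ring

end SndExpansion

namespace FstExpansion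

variable {a b a' b' : ℝ}

theorem fst_sub (hF : FstExpansion F a b) :
    (fun p => (F p).1 - p.1) =O[𝓝 0] fun p => ‖p‖ ^ 2 := by
  have hquad : (fun p : ℝ × ℝ => a * p.1 ^ 2 + b * p.1 * p.2) =O[𝓝 0] fun p => ‖p‖ ^ 2 :=
    ((((isBigO_fst_norm.mul isBigO_fst_norm).const_mul_left a).add
      ((isBigO_fst_norm.mul isBigO_snd_norm).const_mul_left b)).congr
        (fun p => by ring) (fun p => (sq _).symm))
  exact ((hF.trans (isLittleO_norm_pow_norm_pow (by norm_num)).isBigO).add hquad).congr_left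
    fun p => by ring

theorem rightInverse (hΦ : FstExpansion Φ a b) (hΦlin : HasLinearPartNegSnd Φ)
    (hΨlin : HasLinearPartNegSnd Ψ) (hΦΨ : ∀ᶠ p in 𝓝 0, Φ (Ψ p) = p) :
    FstExpansion Ψ (-a) b := by
  have hsq := isBigO_mul_sub_mul hΦlin.fst isBigO_fst_norm hΦlin.fst_sub hΦlin.fst_sub
  have hmul := isBigO_mul_sub_mul hΦlin.fst isBigO_snd_norm.neg_left hΦlin.fst_sub hΦlin.snd_sub
  have hΦside : (fun q : ℝ × ℝ => q.1 - ((Φ q).1 + -a * (Φ q).1 ^ 2 + b * (Φ q).1 * (Φ q).2))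
      =O[𝓝 0] fun q => ‖q‖ ^ 3 :=
    ((hΦ.neg_left.add (hsq.const_mul_left a)).sub (hmul.const_mul_left b)).congr_left
      fun q => by ring
  refine (hΦside.comp_of_isBigO_id hΨlin.isBigO_id).congr' ?_ EventuallyEq.rfl
  filter_upwards [hΦΨ] with p hp
  rw [hp]

theorem comp (hF : FstExpansion F a b) (hG : FstExpansion G a' b')
    (hGlin : HasLinearPartNegSnd G) : FstExpansion (fun p => F (G p)) (a + a') (b' - b) := by
  have hsq := isBigO_mul_sub_mul hGlin.fst isBigO_fst_norm hGlin.fst_sub hGlin.fst_sub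
  have hmul := isBigO_mul_sub_mul hGlin.fst isBigO_snd_norm.neg_left hGlin.fst_sub hGlin.snd_sub
  exact ((((hF.comp_of_isBigO_id hGlin.isBigO_id).add hG).add (hsq.const_mul_left a)).add
    (hmul.const_mul_left b)).congr_left fun p => by ring

theorem hasLinearPartNegSnd {k : ℝ} (hF : FstExpansion F a b) (hF' : SndExpansion F (-1) k) :
    HasLinearPartNegSnd F :=
  hasLinearPartNegSnd_iff.2 ⟨hF.fst_sub, hF'.snd_sub.congr_left fun p => by ring⟩

end FstExpansion

end Planar

theorem inverse_square_form_general
    (Φ : ℝ × ℝ → ℝ × ℝ) (U : Set (ℝ × ℝ)) (hU : U ∈ 𝓝 (0 : ℝ × ℝ))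
    (μ lam : ℝ)
    (hX : (fun p : ℝ × ℝ => (Φ p).1 - (p.1 + p.1 ^ 2 + μ * p.1 * p.2))
      =O[𝓝 (0 : ℝ × ℝ)] fun p => ‖p‖ ^ 3)
    (E : ℝ × ℝ → ℝ) (hE : E =O[𝓝 (0 : ℝ × ℝ)] fun p => ‖p‖ ^ 2)
    (hY : ∀ p ∈ U, (Φ p).2 = -p.2 * (1 - lam * p.1 + E p))
    (Ψ : ℝ × ℝ → ℝ × ℝ) (W : Set (ℝ × ℝ)) (hW : W ∈ 𝓝 (0 : ℝ × ℝ))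
    (hΨ0 : Ψ 0 = 0) (hΨc : ContinuousOn Ψ W)
    (hinv : ∀ p ∈ W, Φ (Ψ p) = p ∧ Ψ (Φ p) = p) :
    ((fun p : ℝ × ℝ => (Ψ (Ψ p)).1 - (p.1 - 2 * p.1 ^ 2))
        =O[𝓝 (0 : ℝ × ℝ)] fun p => ‖p‖ ^ 3) ∧
    ∃ E₂ : ℝ × ℝ → ℝ, (E₂ =O[𝓝 (0 : ℝ × ℝ)] fun p => ‖p‖ ^ 2) ∧
      ∀ᶠ p : ℝ × ℝ in 𝓝 0, (Ψ (Ψ p)).2 = p.2 * (1 + 2 * lam * p.1 + E₂ p) := by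
  have hΦfst : FstExpansion Φ 1 μ := by simpa [FstExpansion] using hX
  have hΦsnd : SndExpansion Φ (-1) (-lam) :=
    ⟨E, hE, mem_of_superset hU fun q hq => by rw [mem_ofPred_eq, hY q hq]; ring⟩
  have hΦlin := hΦfst.hasLinearPartNegSnd hΦsnd
  have hΨ : Tendsto Ψ (𝓝 0) (𝓝 0) := by
    simpa only [ContinuousAt, hΨ0] using hΨc.continuousAt hW
  have hΦΨ : ∀ᶠ p in 𝓝 0, Φ (Ψ p) = p := mem_of_superset hW fun p hp => (hinv p hp).1
  have hΨlin : HasLinearPartNegSnd Ψ := isBigO_sub_symm_of_rightInverse negSnd hΦlin hΨ hΦΨ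
  have hΨfst := hΦfst.rightInverse hΦlin hΨlin hΦΨ
  have hΨsnd := hΦsnd.rightInverse (by norm_num) hΨlin hΦΨ
  refine ⟨?_, ?_⟩
  · exact IsBigO.congr_left (hΨfst.comp hΨfst hΨlin) fun p => by ring
  · obtain ⟨E₂, hE₂, hΨΨ⟩ := hΨsnd.comp hΨsnd hΨlin
    exact ⟨E₂, hE₂, hΨΨ.mono fun p hp => by rw [hp]; ring⟩

/-- Let `Φ` be a `C¹` local diffeomorphism near the origin of the
form `X = x + x² + μxy + O(|(x,y)|³)`, `Y = -y(1 - λx + O(|(x,y)|²))`, `λ > 0`, and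
let `Ψ` be a local inverse of `Φ` near the origin (so `Φ∘Ψ = Ψ∘Φ = id` near `0`).
Then `Φ⁻² = Ψ∘Ψ` has the form `X = x - 2x² + O(|(x,y)|³)`,
`Y = y(1 + 2λx + O(|(x,y)|²))`; in particular the term `μxy` contributes only
`O(|(x,y)|³)` (the quadratic part of the first component is independent of `μ`). -/
theorem inverse_square_form
    (Φ : ℝ × ℝ → ℝ × ℝ) (U : Set (ℝ × ℝ)) (hU : U ∈ 𝓝 (0 : ℝ × ℝ))
    (hΦ : ContDiffOn ℝ 1 Φ U)
    (μ lam : ℝ) (hlam : 0 < lam)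
    (hX : (fun p : ℝ × ℝ => (Φ p).1 - (p.1 + p.1 ^ 2 + μ * p.1 * p.2))
      =O[𝓝 (0 : ℝ × ℝ)] fun p => ‖p‖ ^ 3)
    (E : ℝ × ℝ → ℝ) (hE : E =O[𝓝 (0 : ℝ × ℝ)] fun p => ‖p‖ ^ 2)
    (hY : ∀ p ∈ U, (Φ p).2 = -p.2 * (1 - lam * p.1 + E p))
    (Ψ : ℝ × ℝ → ℝ × ℝ) (W : Set (ℝ × ℝ)) (hW : W ∈ 𝓝 (0 : ℝ × ℝ)) (hWU : W ⊆ U)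
    (hΨ0 : Ψ 0 = 0) (hΨc : ContinuousOn Ψ W)
    (hinv : ∀ p ∈ W, Φ (Ψ p) = p ∧ Ψ (Φ p) = p) :
    ((fun p : ℝ × ℝ => (Ψ (Ψ p)).1 - (p.1 - 2 * p.1 ^ 2))
        =O[𝓝 (0 : ℝ × ℝ)] fun p => ‖p‖ ^ 3) ∧
    ∃ E₂ : ℝ × ℝ → ℝ, (E₂ =O[𝓝 (0 : ℝ × ℝ)] fun p => ‖p‖ ^ 2) ∧
      ∀ᶠ p : ℝ × ℝ in 𝓝 0, (Ψ (Ψ p)).2 = p.2 * (1 + 2 * lam * p.1 + E₂ p) :=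
  inverse_square_form_general Φ U hU μ lam hX E hE hY Ψ W hW hΨ0 hΨc hinv
end

section
/- Let Ψ be a map near the origin of ℝ² of the form Ψ(x,y) = (X,Y) with X = x − 2x² + O(|(x,y)|³) and Y = y(1 + 2λx + O(|(x,y)|²)) as (x,y) → 0, where λ > 0. Then there exist δ > 0 and ε > 0 such that whenever 0 < x ≤ δ and |y| ≤ ε x^(2/3), the image (X,Y) = Ψ(x,y) satisfies 0 < X < x − (1/2)x² and |Y| ≥ |y|. -/
/-!
On the cusp `0 < x ≤ ε³`, `|y| ≤ ε x^(2/3)`, write `x = s³` with `s ≤ ε`; then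
`‖(x, y)‖ ≤ ε s²`, so `‖(x, y)‖³ ≤ ε³ x²` and `‖(x, y)‖² ≤ ε³ x`. Hence for small `ε` the
error `O(‖(x, y)‖³)` in `X` is at most `x²/2`, and the error `O(‖(x, y)‖²)` in the
multiplier of `Y` is dominated by `2λx`.
-/

open Filter Asymptotics Topology

lemma exists_pos_cube_of_eventually_nhds_zero {P : ℝ → Prop} (h : ∀ᶠ η in 𝓝 0, P η) :
    ∃ ε > 0, P (ε ^ 3) := by
  have hcube : Tendsto (fun ε : ℝ => ε ^ 3) (𝓝[>] 0) (𝓝 0) :=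
    ((continuous_pow 3).tendsto' 0 0 (by norm_num)).mono_left nhdsWithin_le_nhds
  exact (eventually_mem_nhdsWithin.and (hcube.eventually h)).exists

lemma exists_cube_eq_and_rpow_two_thirds {x : ℝ} (hx : 0 < x) :
    ∃ s : ℝ, 0 < s ∧ s ^ 3 = x ∧ x ^ ((2 : ℝ) / 3) = s ^ 2 := by
  refine ⟨x ^ ((1 : ℝ) / 3), by positivity, ?_, ?_⟩ <;>
    rw [← Real.rpow_natCast, ← Real.rpow_mul hx.le] <;> norm_num

lemma norm_le_of_abs_le_mul_rpow_two_thirds {ε x y : ℝ} (hx : 0 < x) (hxε : x ≤ ε ^ 3)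
    (hy : |y| ≤ ε * x ^ ((2 : ℝ) / 3)) :
    ‖(x, y)‖ ≤ ε ^ 3 ∧ ‖(x, y)‖ ^ 2 ≤ ε ^ 3 * x ∧ ‖(x, y)‖ ^ 3 ≤ ε ^ 3 * x ^ 2 := by
  obtain ⟨s, hs, rfl, hs2⟩ := exists_cube_eq_and_rpow_two_thirds hx
  have hε : 0 ≤ ε := by nlinarith [pow_pos hs 3, sq_nonneg ε]
  have hsε : s ≤ ε := (pow_le_pow_iff_left₀ hs.le hε three_ne_zero).1 hxε
  have hnorm : ‖(s ^ 3, y)‖ ≤ ε * s ^ 2 := by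
    rw [Prod.norm_mk, Real.norm_eq_abs, Real.norm_eq_abs, abs_of_pos hx]
    refine max_le ?_ (hs2 ▸ hy)
    nlinarith [sq_nonneg s]
  have hn : 0 ≤ ‖(s ^ 3, y)‖ := norm_nonneg _
  refine ⟨?_, ?_, ?_⟩
  · calc ‖(s ^ 3, y)‖ ≤ ε * s ^ 2 := hnorm
      _ ≤ ε * ε ^ 2 := by gcongr
      _ = ε ^ 3 := by ring
  · calc ‖(s ^ 3, y)‖ ^ 2 ≤ (ε * s ^ 2) ^ 2 := by gcongr
      _ = ε ^ 2 * s * s ^ 3 := by ring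
      _ ≤ ε ^ 2 * ε * s ^ 3 := by gcongr
      _ = ε ^ 3 * s ^ 3 := by ring
  · calc ‖(s ^ 3, y)‖ ^ 3 ≤ (ε * s ^ 2) ^ 3 := by gcongr
      _ = ε ^ 3 * (s ^ 3) ^ 2 := by ring

lemma pos_and_lt_of_abs_sub_le {x X : ℝ} (hx : 0 < x) (hx3 : x ≤ 1 / 3)
    (h : |X - (x - 2 * x ^ 2)| ≤ x ^ 2 / 2) : 0 < X ∧ X < x - x ^ 2 / 2 := by
  obtain ⟨hlo, hhi⟩ := abs_le.1 h
  constructor <;> nlinarith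

lemma abs_le_abs_mul_one_add_add {y a e : ℝ} (he : |e| ≤ a) :
    |y| ≤ |y * (1 + a + e)| := by
  rw [abs_mul]
  refine le_mul_of_one_le_right (abs_nonneg y) ?_
  rw [abs_of_pos] <;> linarith [neg_abs_le e]

/-- Let `Ψ` be a map near the origin of the form
`X = x - 2x² + O(|(x,y)|³)`, `Y = y(1 + 2λx + O(|(x,y)|²))` with `λ > 0`. Then there
are `δ > 0` and `ε > 0` such that for `0 < x ≤ δ` and `|y| ≤ ε x^(2/3)`, the image
`(X,Y) = Ψ(x,y)` satisfies `0 < X < x - x²/2` and `|Y| ≥ |y|`. -/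
theorem contraction_and_repulsion
    (Ψ : ℝ × ℝ → ℝ × ℝ) (U : Set (ℝ × ℝ)) (hU : U ∈ 𝓝 (0 : ℝ × ℝ))
    (lam : ℝ) (hlam : 0 < lam)
    (hX : (fun p : ℝ × ℝ => (Ψ p).1 - (p.1 - 2 * p.1 ^ 2))
      =O[𝓝 (0 : ℝ × ℝ)] fun p => ‖p‖ ^ 3)
    (E : ℝ × ℝ → ℝ) (hE : E =O[𝓝 (0 : ℝ × ℝ)] fun p => ‖p‖ ^ 2)
    (hY : ∀ p ∈ U, (Ψ p).2 = p.2 * (1 + 2 * lam * p.1 + E p)) :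
    ∃ δ > (0 : ℝ), ∃ ε > (0 : ℝ), ∀ x y : ℝ,
      0 < x → x ≤ δ → |y| ≤ ε * x ^ ((2 : ℝ) / 3) →
      (0 < (Ψ (x, y)).1 ∧ (Ψ (x, y)).1 < x - x ^ 2 / 2) ∧ |y| ≤ |(Ψ (x, y)).2| := by
  obtain ⟨C₁, hC₁, hX⟩ := hX.exists_pos
  obtain ⟨C₂, hC₂, hE⟩ := hE.exists_pos
  obtain ⟨r, hr, hball⟩ := Metric.eventually_nhds_iff.1 (hX.bound.and (hE.bound.and hU))
  have hsmall : ∀ᶠ η in 𝓝 (0 : ℝ), η < r ∧ C₁ * η ≤ 1 / 2 ∧ C₂ * η ≤ 2 * lam ∧ η ≤ 1 / 3 := by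
    have hlin : ∀ C c : ℝ, 0 < c → ∀ᶠ η in 𝓝 (0 : ℝ), C * η ≤ c := fun C c hc =>
      ((continuous_const_mul C).tendsto' 0 0 (mul_zero C)).eventually (eventually_le_nhds hc)
    exact (eventually_lt_nhds hr).and ((hlin _ _ (by norm_num)).and
      ((hlin _ _ (by positivity)).and (eventually_le_nhds (by norm_num))))
  obtain ⟨ε, hε, hεr, hεX, hεE, hε3⟩ := exists_pos_cube_of_eventually_nhds_zero hsmall
  refine ⟨ε ^ 3, pow_pos hε 3, ε, hε, fun x y hx hxδ hy => ?_⟩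
  obtain ⟨hp, hp2, hp3⟩ := norm_le_of_abs_le_mul_rpow_two_thirds hx hxδ hy
  obtain ⟨hbX, hbE, hpU⟩ := @hball (x, y) (by simpa using hp.trans_lt hεr)
  simp only [norm_pow, Real.norm_eq_abs, abs_norm] at hbX hbE
  refine ⟨pos_and_lt_of_abs_sub_le hx (hxδ.trans hε3) ?_, ?_⟩
  · calc _ ≤ C₁ * (ε ^ 3 * x ^ 2) := hbX.trans (by gcongr)
      _ ≤ x ^ 2 / 2 := by nlinarith [sq_nonneg x]
  · rw [hY _ hpU]
    refine abs_le_abs_mul_one_add_add ?_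
    calc _ ≤ C₂ * (ε ^ 3 * x) := hbE.trans (by gcongr)
      _ ≤ 2 * lam * x := by nlinarith
end
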